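/- arXiv:nlin/0306005 — 10 statements merged into one kernel-verified Lean document; each statement's English description precedes it below -/
import Mathlib

section
/- For every integer N ≥ 1 and all indices i, k, l, m ∈ {1, …, N}, one has Σ_{j=1}^N r_{ijk} r_{lmj} = Σ_{j=1}^N r_{mjk} r_{ilj}; equivalently, the quantity t_{iklm} = Σ_{j=1}^N r_{ijk} r_{lmj} is invariant under cyclic permutations of the index triple (i, l, m). -/
/-- The discrete Heaviside function: `hv m = 1` if `m > 0`, else `0`. -/
def hv (m : ℤ) : ℤ := if 0 < m then 1 else 0

/-- The Kronecker delta. -/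
def kd (i j : ℤ) : ℤ := if i = j then 1 else 0

/-- The structure constants of the bivector `R`:
`r_{ijk} = (k−1)δ_{ij}δ_{jk} − θ(i−k)δ_{ij} + θ(j−i)δ_{ik} + θ(i−j)δ_{jk}`. -/
def rco (i j k : ℤ) : ℤ :=
  (k - 1) * kd i j * kd j k - hv (i - k) * kd i j + hv (j - i) * kd i k + hv (i - j) * kd j k

lemma kd_symm (a b : ℤ) : kd a b = kd b a := by
  unfold kd; split_ifs <;> simp_all

lemma rco_decomp (a b c : ℤ) :
    rco a b c = kd a b * ((c-1)*kd a c - hv (a-c)) + kd c b * hv (a-c) + kd a c * hv (b-a) := by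
  unfold rco kd hv; split_ifs <;> omega

lemma sum_kd_mul (s : Finset ℤ) (a : ℤ) (g : ℤ → ℤ) (ha : a ∈ s) :
    ∑ j ∈ s, kd a j * g j = g a := by
  have h : ∀ j, kd a j * g j = if a = j then g j else 0 := by
    intro j; unfold kd; split_ifs <;> ring
  simp only [h]
  rw [Finset.sum_ite_eq, if_pos ha]

lemma sum_band (N i l : ℤ) (hi : 1 ≤ i) (hl : l ≤ N) :
    ∑ j ∈ Finset.Icc 1 N, hv (j - i) * hv (l - j) = ((l - 1 - i).toNat : ℤ) := by
  have h1 : ∀ j, hv (j - i) * hv (l - j)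
      = if j ∈ Finset.Icc (i+1) (l-1) then (1:ℤ) else 0 := by
    intro j; unfold hv; simp only [Finset.mem_Icc]; split_ifs <;> omega
  simp only [h1]
  rw [Finset.sum_ite_mem]
  have h2 : Finset.Icc 1 N ∩ Finset.Icc (i+1) (l-1) = Finset.Icc (i+1) (l-1) := by
    rw [Finset.inter_eq_right]
    intro x hx; simp only [Finset.mem_Icc] at *; omega
  rw [h2, Finset.sum_const, Int.card_Icc]
  simp; omega

lemma sum_eval (N i k l m : ℤ) (hi : i ∈ Finset.Icc 1 N) (hk : k ∈ Finset.Icc 1 N)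
    (hl : l ∈ Finset.Icc 1 N) (hm : m ∈ Finset.Icc 1 N) :
    ∑ j ∈ Finset.Icc 1 N, rco i j k * rco l m j =
      ((k-1)*kd i k - hv (i-k)) * rco l m i + hv (i-k) * rco l m k
      + kd i k * ( hv (l-i) * (kd l m * (l-1) + hv (m-l)) + hv (m-i) * hv (l-m)
                   - kd l m * ((l - 1 - i).toNat : ℤ) ) := by
  have hpt : ∀ j, rco i j k * rco l m j =
      kd i j * (((k-1)*kd i k - hv (i-k)) * rco l m j)
      + kd k j * (hv (i-k) * rco l m j)
      + kd i k * (kd l j * (hv (j - i) * (kd l m * (j-1) + hv (m-l)))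
                  + kd m j * (hv (j - i) * hv (l - j))
                  - kd l m * (hv (j-i) * hv (l-j))) := by
    intro j
    rw [rco_decomp i j k, rco_decomp l m j, kd_symm j m]
    ring
  simp only [hpt]
  rw [Finset.sum_add_distrib, Finset.sum_add_distrib,
    sum_kd_mul _ _ _ hi, sum_kd_mul _ _ _ hk, ← Finset.mul_sum]
  rw [Finset.sum_sub_distrib, Finset.sum_add_distrib,
    sum_kd_mul _ _ _ hl, sum_kd_mul _ _ _ hm, ← Finset.mul_sum]
  simp only [Finset.mem_Icc] at hi hl
  rw [sum_band N i l hi.1 hl.2]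

set_option maxHeartbeats 2000000 in
lemma Tid (i k l m : ℤ) :
    ((k-1)*kd i k - hv (i-k)) * rco l m i + hv (i-k) * rco l m k
      + kd i k * ( hv (l-i) * (kd l m * (l-1) + hv (m-l)) + hv (m-i) * hv (l-m)
                   - kd l m * ((l - 1 - i).toNat : ℤ) )
    = ((k-1)*kd m k - hv (m-k)) * rco i l m + hv (m-k) * rco i l k
      + kd m k * ( hv (i-m) * (kd i l * (i-1) + hv (l-i)) + hv (l-m) * hv (i-l)
                   - kd i l * ((i - 1 - m).toNat : ℤ) ) := by
  simp only [rco]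
  simp only [kd_symm m i, kd_symm l i, kd_symm m k, kd_symm l k]
  rcases eq_or_ne i k with h1 | h1 <;>
  rcases eq_or_ne i l with h2 | h2 <;>
  rcases eq_or_ne i m with h3 | h3 <;>
  rcases eq_or_ne k l with h4 | h4 <;>
  rcases eq_or_ne k m with h5 | h5 <;>
  rcases eq_or_ne l m with h6 | h6 <;>
  simp_all only [kd, hv, ne_eq, if_true, if_false, ite_true, ite_false, not_true,
    not_false_iff] <;>
  split_ifs <;> omega

/-- For every `N ≥ 1` and indices `i, k, l, m ∈ {1, …, N}`,
`Σ_{j=1}^N r_{ijk} r_{lmj} = Σ_{j=1}^N r_{mjk} r_{ilj}`, i.e. the quantity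
`t_{iklm} = Σ_j r_{ijk} r_{lmj}` is invariant under cyclic permutations of `(i, l, m)`. -/
theorem stmt0 (N : ℤ) (hN : 1 ≤ N) (i k l m : ℤ)
    (hi : i ∈ Finset.Icc 1 N) (hk : k ∈ Finset.Icc 1 N)
    (hl : l ∈ Finset.Icc 1 N) (hm : m ∈ Finset.Icc 1 N) :
    ∑ j ∈ Finset.Icc 1 N, rco i j k * rco l m j =
      ∑ j ∈ Finset.Icc 1 N, rco m j k * rco i l j := by
  rw [sum_eval N i k l m hi hk hl hm, sum_eval N m k i l hm hk hi hl]
  exact Tid i k l m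
end

section
/- For every integer N ≥ 1, every d ≥ 1, and all d×d complex matrices A_1, …, A_N, α_1, …, α_N, β_1, …, β_N, γ_1, …, γ_N, the following trilinear expression vanishes: Σ_{i,j,k,l,m=1}^N r_{ijk} r_{lmj} ( Tr(A_k [[β_m, α_l], γ_i]) + Tr(A_k [[γ_m, β_l], α_i]) + Tr(A_k [[α_m, γ_l], β_i]) ) = 0, where [X, Y] = XY − YX. This is the Jacobi identity for the bracket {F,G}_R = Σ_{i,j,k} r_{ijk} Tr(A_k [∂G/∂A_j, ∂F/∂A_i]) evaluated on linear functions. -/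
/-- The commutator `[X, Y] = XY − YX`. -/
def cm {R : Type*} [Ring R] (X Y : R) : R := X * Y - Y * X

/-- Closed form of `∑ j ∈ Icc 1 N, rco i j k * rco l m j` (independent of `N`). -/
def eC (i l m k : ℤ) : ℤ :=
  ((k-1)*kd i k - hv (i-k)) * rco l m i + hv (i-k) * rco l m k +
    kd i k * (((l-1)*kd l m + hv (m-l)) * hv (l-i) + hv (l-m) * hv (m-i)
      - kd l m * max (l-i-1) 0)

lemma hv_mul (a b : ℤ) : hv a * hv b = min (hv a) (hv b) := by
  unfold hv; split_ifs <;> simp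

lemma hv_minmax (a : ℤ) : hv a = min 1 (max 0 a) := by
  unfold hv; split_ifs <;> omega

set_option maxHeartbeats 1000000 in
/-- `eC` is invariant under cyclic permutation of its first three arguments. -/
lemma eC_cyc (i l m k : ℤ) : eC i l m k = eC m i l k := by
  by_cases h1 : i = k <;> by_cases h2 : l = m <;> by_cases h3 : m = k <;>
    by_cases h4 : i = l <;> by_cases h5 : m = i <;> by_cases h6 : l = k <;>
    subst_vars <;>
    simp [eC, rco, kd, hv_mul, mul_comm, mul_assoc, mul_left_comm, *] <;>
    first
      | (simp only [hv_minmax]; omega)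
      | (simp only [hv]; split_ifs <;> omega)

lemma Fdec (i j k : ℤ) : rco i j k =
    ((k-1)*kd i k - hv (i-k)) * kd j i + hv (i-k) * kd j k + kd i k * hv (j-i) := by
  simp only [rco, kd, hv]; split_ifs <;> omega

lemma Gdec (l m j : ℤ) : rco l m j =
    ((l-1)*kd l m + hv (m-l)) * kd j l + hv (l-m) * kd j m - kd l m * hv (l-j) := by
  simp only [rco, kd, hv]; split_ifs <;> omega

lemma ptSum {N c : ℤ} (hc : c ∈ Finset.Icc 1 N) (f : ℤ → ℤ) :
    ∑ j ∈ Finset.Icc 1 N, kd j c * f j = f c := by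
  have h : ∀ j, kd j c * f j = if j = c then f j else 0 := by
    intro j; by_cases hj : j = c <;> simp [kd, hj]
  rw [Finset.sum_congr rfl fun j _ => h j, Finset.sum_ite_eq' _ c f, if_pos hc]

lemma cntSum {N i l : ℤ} (hi : 1 ≤ i) (hl : l ≤ N) :
    ∑ j ∈ Finset.Icc 1 N, hv (j - i) * hv (l - j) = max (l - i - 1) 0 := by
  have h : ∀ j, hv (j - i) * hv (l - j) = if j ∈ Finset.Ioo i l then 1 else 0 := by
    intro j; simp only [hv, Finset.mem_Ioo]; split_ifs <;> omega
  rw [Finset.sum_congr rfl fun j _ => h j, Finset.sum_ite_mem]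
  have h2 : Finset.Icc 1 N ∩ Finset.Ioo i l = Finset.Ioo i l := by
    apply Finset.inter_eq_right.mpr
    intro x hx
    simp only [Finset.mem_Ioo] at hx
    simp only [Finset.mem_Icc]
    omega
  rw [h2, Finset.sum_const, Int.card_Ioo]
  simp only [nsmul_eq_mul, mul_one]
  omega

lemma Hsum {N i l m : ℤ} (hi : i ∈ Finset.Icc 1 N) (hl : l ∈ Finset.Icc 1 N)
    (hm : m ∈ Finset.Icc 1 N) :
    ∑ j ∈ Finset.Icc 1 N, hv (j - i) * rco l m j
      = ((l-1)*kd l m + hv (m-l)) * hv (l-i) + hv (l-m) * hv (m-i)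
        - kd l m * max (l-i-1) 0 := by
  simp only [Finset.mem_Icc] at hi hl
  have h : ∀ j, hv (j-i) * rco l m j
      = (((l-1)*kd l m + hv (m-l)) * (kd j l * hv (j - i))
          + hv (l-m) * (kd j m * hv (j - i))) - kd l m * (hv (j - i) * hv (l - j)) := by
    intro j; rw [Gdec]; ring
  rw [Finset.sum_congr rfl fun j _ => h j, Finset.sum_sub_distrib, Finset.sum_add_distrib,
      ← Finset.mul_sum, ← Finset.mul_sum, ← Finset.mul_sum,
      ptSum (by simp only [Finset.mem_Icc]; omega : l ∈ Finset.Icc 1 N),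
      ptSum hm, cntSum hi.1 hl.2]

lemma Cval {N i l m k : ℤ} (hi : i ∈ Finset.Icc 1 N) (hk : k ∈ Finset.Icc 1 N)
    (hl : l ∈ Finset.Icc 1 N) (hm : m ∈ Finset.Icc 1 N) :
    ∑ j ∈ Finset.Icc 1 N, rco i j k * rco l m j = eC i l m k := by
  have h : ∀ j, rco i j k * rco l m j
      = (((k-1)*kd i k - hv (i-k)) * (kd j i * rco l m j)
          + hv (i-k) * (kd j k * rco l m j))
        + kd i k * (hv (j-i) * rco l m j) := by
    intro j; rw [Fdec i j k]; ring
  rw [Finset.sum_congr rfl fun j _ => h j, Finset.sum_add_distrib, Finset.sum_add_distrib,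
      ← Finset.mul_sum, ← Finset.mul_sum, ← Finset.mul_sum,
      ptSum hi, ptSum hk, Hsum hi hl hm]
  rfl

lemma jacobi {R : Type*} [Ring R] (X Y Z : R) :
    cm (cm X Y) Z + cm (cm Z X) Y + cm (cm Y Z) X = 0 := by
  simp only [cm]; noncomm_ring

lemma cyc3 {M : Type*} [AddCommMonoid M] (s : Finset ℤ) (f : ℤ → ℤ → ℤ → M) :
    (∑ i ∈ s, ∑ l ∈ s, ∑ m ∈ s, f i l m) = ∑ i ∈ s, ∑ l ∈ s, ∑ m ∈ s, f m i l := by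
  rw [Finset.sum_comm]
  exact Finset.sum_congr rfl fun x _ => Finset.sum_comm

lemma cyc3' {M : Type*} [AddCommMonoid M] (s : Finset ℤ) (f : ℤ → ℤ → ℤ → M) :
    (∑ i ∈ s, ∑ l ∈ s, ∑ m ∈ s, f i l m) = ∑ i ∈ s, ∑ l ∈ s, ∑ m ∈ s, f l m i :=
  (cyc3 s f).trans (cyc3 s fun i l m => f m i l)


/-- The Jacobi identity for the bracket `{F,G}_R` evaluated on linear functions:
for all `d×d` complex matrices `A_i, α_i, β_i, γ_i` (`i = 1, …, N`),
`Σ_{i,j,k,l,m} r_{ijk} r_{lmj} (Tr(A_k [[β_m, α_l], γ_i]) + Tr(A_k [[γ_m, β_l], α_i])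
 + Tr(A_k [[α_m, γ_l], β_i])) = 0`. -/
theorem stmt1 (N : ℤ) (hN : 1 ≤ N) (d : ℕ) (hd : 1 ≤ d)
    (A α β γ : ℤ → Matrix (Fin d) (Fin d) ℂ) :
    ∑ i ∈ Finset.Icc 1 N, ∑ j ∈ Finset.Icc 1 N, ∑ k ∈ Finset.Icc 1 N,
      ∑ l ∈ Finset.Icc 1 N, ∑ m ∈ Finset.Icc 1 N,
        ((rco i j k * rco l m j : ℤ) : ℂ) *
          (Matrix.trace (A k * cm (cm (β m) (α l)) (γ i))
            + Matrix.trace (A k * cm (cm (γ m) (β l)) (α i))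
            + Matrix.trace (A k * cm (cm (α m) (γ l)) (β i))) = 0 := by
  set s := Finset.Icc (1:ℤ) N with hs
  -- T is the trilinear trace part
  set T : ℤ → ℤ → ℤ → ℤ → ℂ := fun i k l m =>
    (Matrix.trace (A k * cm (cm (β m) (α l)) (γ i))
      + Matrix.trace (A k * cm (cm (γ m) (β l)) (α i))
      + Matrix.trace (A k * cm (cm (α m) (γ l)) (β i))) with hT
  have step1 : (∑ i ∈ s, ∑ j ∈ s, ∑ k ∈ s, ∑ l ∈ s, ∑ m ∈ s,
      ((rco i j k * rco l m j : ℤ) : ℂ) * T i k l m)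
      = ∑ i ∈ s, ∑ k ∈ s, ∑ l ∈ s, ∑ m ∈ s, ((eC i l m k : ℤ) : ℂ) * T i k l m := by
    refine Finset.sum_congr rfl fun i hi => ?_
    rw [Finset.sum_comm]
    refine Finset.sum_congr rfl fun k hk => ?_
    rw [Finset.sum_comm]
    refine Finset.sum_congr rfl fun l hl => ?_
    rw [Finset.sum_comm]
    refine Finset.sum_congr rfl fun m hm => ?_
    rw [← Finset.sum_mul]
    congr 1
    rw [← Int.cast_sum, Cval hi hk hl hm]
  rw [step1, Finset.sum_comm]
  refine Finset.sum_eq_zero fun k hk => ?_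
  simp only [hT, mul_add, Finset.sum_add_distrib]
  have e2 : (∑ i ∈ s, ∑ l ∈ s, ∑ m ∈ s,
        ((eC i l m k : ℤ) : ℂ) * Matrix.trace (A k * cm (cm (γ m) (β l)) (α i)))
      = ∑ i ∈ s, ∑ l ∈ s, ∑ m ∈ s,
        ((eC i l m k : ℤ) : ℂ) * Matrix.trace (A k * cm (cm (γ i) (β m)) (α l)) := by
    rw [cyc3' s (fun i l m => ((eC i l m k : ℤ) : ℂ)
      * Matrix.trace (A k * cm (cm (γ m) (β l)) (α i)))]
    refine Finset.sum_congr rfl fun i _ => Finset.sum_congr rfl fun l _ =>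
      Finset.sum_congr rfl fun m _ => ?_
    rw [eC_cyc l m i k]
  have e3 : (∑ i ∈ s, ∑ l ∈ s, ∑ m ∈ s,
        ((eC i l m k : ℤ) : ℂ) * Matrix.trace (A k * cm (cm (α m) (γ l)) (β i)))
      = ∑ i ∈ s, ∑ l ∈ s, ∑ m ∈ s,
        ((eC i l m k : ℤ) : ℂ) * Matrix.trace (A k * cm (cm (α l) (γ i)) (β m)) := by
    rw [cyc3 s (fun i l m => ((eC i l m k : ℤ) : ℂ)
      * Matrix.trace (A k * cm (cm (α m) (γ l)) (β i)))]
    refine Finset.sum_congr rfl fun i _ => Finset.sum_congr rfl fun l _ =>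
      Finset.sum_congr rfl fun m _ => ?_
    rw [← eC_cyc i l m k]
  rw [e2, e3]
  simp only [← Finset.sum_add_distrib, ← mul_add]
  refine Finset.sum_eq_zero fun i _ => Finset.sum_eq_zero fun l _ =>
    Finset.sum_eq_zero fun m _ => ?_
  have hz : cm (cm (β m) (α l)) (γ i) + cm (cm (γ i) (β m)) (α l)
      + cm (cm (α l) (γ i)) (β m) = 0 := jacobi _ _ _
  rw [← Matrix.trace_add, ← Matrix.trace_add, ← mul_add, ← mul_add, hz, mul_zero,
    Matrix.trace_zero, mul_zero]
end

section
/- Let a_1, …, a_N be pairwise distinct complex numbers (N ≥ 1), σ, A_1, …, A_N d×d complex matrices, and define B_l = (−1)^{N−l−1} Σ_{i=1}^N s_{N−l−1}(a_1, …, â_i, …, a_N) A_i + (−1)^{N−l} s_{N−l}(a_1, …, a_N) σ for l = 0, …, N−1, B_N = σ, and B_m = 0 for m < 0 or m > N. For l = 0, …, N, let Π_l act on N-tuples ξ = (ξ_1, …, ξ_N) of d×d complex matrices by (Π_l ξ)_i = −Σ_{j=1}^{l} [B_{i+j−l−1}, ξ_j] for 1 ≤ i ≤ l, and (Π_l ξ)_i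 = Σ_{j=1}^{N−l} [B_{i+j−1}, ξ_{j+l}] for l+1 ≤ i ≤ N. Let J_{ij} = (−1)^{N−i} s_{N−i}(a_1, …, â_j, …, a_N). Then for every tuple ξ and every i ∈ {1, …, N}: Σ_{l=0}^N (−1)^{N−l−1} s_{N−l}(a_1, …, a_N) (Π_l ξ)_i = Σ_{j=1}^N J_{ij} [A_j, Σ_{m=1}^N J_{mj} ξ_m]. That is, the diagonal Lie–Poisson tensor P, pushed forward by the linear change of variables with Jacobian J, equals the combination Σ_{l=0}^N (−1)^{N−l−1} s_{N−l}(a_1, …, a_N) Π_l of the RSTS tensors. -/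
/-- The `m`-th elementary symmetric polynomial of the family `a` over the finite
index set `s`, with the conventions `s_0 = 1` and `s_m = 0` for `m > |s|`. -/
def esym {ι R : Type*} [CommRing R] (s : Finset ι) (a : ι → R) (m : ℕ) : R :=
  ∑ t ∈ s.powersetCard m, ∏ i ∈ t, a i

/-- The `i`-th component of the fundamental RSTS Poisson tensor `Π_l` applied to the
tuple `ξ = (ξ_1, …, ξ_N)`:
`(Π_l ξ)_i = −Σ_{j=1}^{l} [B_{i+j−l−1}, ξ_j]` for `1 ≤ i ≤ l`, and
`(Π_l ξ)_i = Σ_{j=1}^{N−l} [B_{i+j−1}, ξ_{j+l}]` for `l+1 ≤ i ≤ N`. -/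
noncomputable def PiL (N d : ℕ) (B : ℤ → Matrix (Fin d) (Fin d) ℂ) (l : ℕ)
    (ξ : ℕ → Matrix (Fin d) (Fin d) ℂ) (i : ℕ) : Matrix (Fin d) (Fin d) ℂ :=
  if i ≤ l then
    -∑ j ∈ Finset.Icc 1 l, cm (B ((i : ℤ) + (j : ℤ) - (l : ℤ) - 1)) (ξ j)
  else
    ∑ j ∈ Finset.Icc 1 (N - l), cm (B ((i : ℤ) + (j : ℤ) - 1)) (ξ (j + l))

section aux
open Finset

variable {ι : Type*} [DecidableEq ι] {R : Type*} [CommRing R]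

lemma esym_zero (s : Finset ι) (a : ι → R) : esym s a 0 = 1 := by
  simp [esym]

lemma esym_eq_zero (s : Finset ι) (a : ι → R) (m : ℕ) (h : s.card < m) :
    esym s a m = 0 := by
  simp [esym, Finset.powersetCard_eq_empty.2 h]

lemma esym_rec (s : Finset ι) (a : ι → R) (q : ι) (hq : q ∈ s) (m : ℕ) :
    esym s a (m+1) = esym (s.erase q) a (m+1) + a q * esym (s.erase q) a m := by
  have h : q ∉ s.erase q := Finset.notMem_erase _ _
  conv_lhs => rw [esym, ← Finset.insert_erase hq, Finset.powersetCard_succ_insert h]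
  rw [Finset.sum_union, Finset.sum_image]
  · congr 1
    simp only [esym, Finset.mul_sum]
    apply Finset.sum_congr rfl
    intro t ht
    rw [Finset.prod_insert (fun hqt => h ((Finset.mem_powersetCard.1 ht).1 hqt))]
  · intro t ht u hu htu
    have hqt : q ∉ t := fun hc => h ((Finset.mem_powersetCard.1 ht).1 hc)
    have hqu : q ∉ u := fun hc => h ((Finset.mem_powersetCard.1 hu).1 hc)
    have := congrArg (Finset.erase · q) htu
    simpa [Finset.erase_insert hqt, Finset.erase_insert hqu] using this
  · rw [Finset.disjoint_right]
    intro u hu hu'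
    obtain ⟨t, ht, rfl⟩ := Finset.mem_image.1 hu
    exact (Finset.mem_powersetCard.1 hu').1 (Finset.mem_insert_self q t) |> h

/-- zero-extension to ℤ of esym over `Icc 1 N`. -/
noncomputable def Ez (N : ℕ) (a : ℕ → ℂ) (v : ℤ) : ℂ :=
  if 0 ≤ v then esym (Finset.Icc 1 N) a v.toNat else 0

noncomputable def Fz (N : ℕ) (a : ℕ → ℂ) (q : ℕ) (v : ℤ) : ℂ :=
  if 0 ≤ v then esym ((Finset.Icc 1 N).erase q) a v.toNat else 0

lemma Ez_neg (N : ℕ) (a : ℕ → ℂ) (v : ℤ) (h : v < 0) : Ez N a v = 0 := by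
  simp [Ez, not_le.2 h]

lemma Ez_big (N : ℕ) (a : ℕ → ℂ) (v : ℤ) (h : (N:ℤ) < v) : Ez N a v = 0 := by
  have h0 : (0:ℤ) ≤ v := le_of_lt (lt_of_le_of_lt (Int.ofNat_nonneg N) h)
  rw [Ez, if_pos h0, esym_eq_zero]
  rw [Nat.card_Icc]
  omega

lemma Fz_neg (N : ℕ) (a : ℕ → ℂ) (q : ℕ) (v : ℤ) (h : v < 0) : Fz N a q v = 0 := by
  simp [Fz, not_le.2 h]

lemma Fz_big (N : ℕ) (a : ℕ → ℂ) (q : ℕ) (v : ℤ) (hq : q ∈ Finset.Icc 1 N)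
    (h : (N:ℤ) - 1 < v) : Fz N a q v = 0 := by
  have hN : (1:ℕ) ≤ N := (Finset.mem_Icc.1 hq).1.trans (Finset.mem_Icc.1 hq).2
  have h0 : (0:ℤ) ≤ v := by omega
  rw [Fz, if_pos h0, esym_eq_zero]
  rw [Finset.card_erase_of_mem hq, Nat.card_Icc]
  omega

lemma Ez_rec (N : ℕ) (a : ℕ → ℂ) (q : ℕ) (hq : q ∈ Finset.Icc 1 N) (v : ℤ) :
    Ez N a v = Fz N a q v + a q * Fz N a q (v - 1) := by
  rcases lt_trichotomy v 0 with h | h | h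
  · rw [Ez_neg _ _ _ h, Fz_neg _ _ _ _ h, Fz_neg N a q (v-1) (by omega)]; ring
  · subst h
    rw [show ((0:ℤ) - 1) = (-1 : ℤ) by omega, Fz_neg N a q (-1) (by omega)]
    simp [Ez, Fz, esym_zero]
  · have h0 : (0:ℤ) ≤ v := le_of_lt h
    have h1 : (0:ℤ) ≤ v - 1 := by omega
    rw [Ez, Fz, Fz, if_pos h0, if_pos h0, if_pos h1]
    have hv : v.toNat = (v-1).toNat + 1 := by omega
    rw [hv, esym_rec _ a q hq]

/-- the central symmetry lemma -/
lemma key (G : ℤ → ℂ) (n c m : ℤ) (h0 : ∀ v, v < 0 → G v = 0)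
    (hn : ∀ v, n < v → G v = 0) :
    ∑ u ∈ Finset.Icc 0 m, G u * G (c - u) = ∑ u ∈ Finset.Icc (c - m) n, G u * G (c - u) := by
  have step1 : ∑ u ∈ Finset.Icc 0 m, G u * G (c - u)
      = ∑ u ∈ Finset.Icc (c - m) c, G u * G (c - u) := by
    apply Finset.sum_nbij' (fun u => c - u) (fun u => c - u)
    · intro u hu; simp only [Finset.mem_Icc] at hu ⊢; omega
    · intro u hu; simp only [Finset.mem_Icc] at hu ⊢; omega
    · intro u _; omega
    · intro u _; omega
    · intro u _
      have h : c - (c - u) = u := by omega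
      rw [h, mul_comm]
  rw [step1]
  have pad : ∀ b : ℤ, c ≤ b → n ≤ b →
      (∑ u ∈ Finset.Icc (c - m) c, G u * G (c - u)
        = ∑ u ∈ Finset.Icc (c - m) b, G u * G (c - u)) ∧
      (∑ u ∈ Finset.Icc (c - m) n, G u * G (c - u)
        = ∑ u ∈ Finset.Icc (c - m) b, G u * G (c - u)) := by
    intro b hc hb
    constructor
    · apply Finset.sum_subset
      · intro x hx; simp only [Finset.mem_Icc] at hx ⊢; omega
      · intro x hx hx'
        simp only [Finset.mem_Icc] at hx hx'
        rw [h0 (c - x) (by omega)]; ring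
    · apply Finset.sum_subset
      · intro x hx; simp only [Finset.mem_Icc] at hx ⊢; omega
      · intro x hx hx'
        simp only [Finset.mem_Icc] at hx hx'
        rw [hn x (by omega)]; ring
  obtain ⟨p1, p2⟩ := pad (max c n) (le_max_left _ _) (le_max_right _ _)
  rw [p1, p2]

end aux

section aux2
open Finset

lemma cm_sum_smul_left {d : ℕ} {α : Type*} (S : Finset α) (r : α → ℂ)
    (X : α → Matrix (Fin d) (Fin d) ℂ) (Y : Matrix (Fin d) (Fin d) ℂ) :
    cm (∑ l ∈ S, r l • X l) Y = ∑ l ∈ S, r l • cm (X l) Y := by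
  simp [cm, Finset.sum_mul, Finset.mul_sum, smul_mul_assoc, mul_smul_comm, smul_sub,
    Finset.sum_sub_distrib]

lemma cm_sum_smul_right {d : ℕ} {α : Type*} (S : Finset α) (r : α → ℂ)
    (X : Matrix (Fin d) (Fin d) ℂ) (Y : α → Matrix (Fin d) (Fin d) ℂ) :
    cm X (∑ m ∈ S, r m • Y m) = ∑ m ∈ S, r m • cm X (Y m) := by
  simp [cm, Finset.sum_mul, Finset.mul_sum, smul_mul_assoc, mul_smul_comm, smul_sub,
    Finset.sum_sub_distrib]

/-- the sign/selector of the `(i,l,j)` entry. -/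
def sgn (i l j : ℕ) : ℂ :=
  if i ≤ l then (if j ≤ l then -1 else 0) else (if l < j then 1 else 0)

lemma sgn_split (N i j : ℕ) (hi : i ∈ Finset.Icc 1 N) (hj : j ∈ Finset.Icc 1 N)
    (g : ℕ → ℂ) :
    ∑ l ∈ Finset.range (N+1), sgn i l j * g l
      = ∑ l ∈ Finset.range (min i j), g l - ∑ l ∈ Finset.Icc (max i j) N, g l := by
  obtain ⟨hi1, hi2⟩ := Finset.mem_Icc.1 hi
  obtain ⟨hj1, hj2⟩ := Finset.mem_Icc.1 hj
  have hsgn : ∀ l, sgn i l j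
      = (if l < min i j then (1:ℂ) else 0) - (if max i j ≤ l then 1 else 0) := by
    intro l
    unfold sgn
    rcases le_total i j with hij | hij
    · rw [min_eq_left hij, max_eq_right hij]
      split_ifs <;> (try omega) <;> norm_num
    · rw [min_eq_right hij, max_eq_left hij]
      split_ifs <;> (try omega) <;> norm_num
  have h1 : Finset.filter (fun l => l < min i j) (Finset.range (N+1))
      = Finset.range (min i j) := by
    ext x; simp only [Finset.mem_filter, Finset.mem_range, lt_min_iff]; omega
  have h2 : Finset.filter (fun l => max i j ≤ l) (Finset.range (N+1))
      = Finset.Icc (max i j) N := by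
    ext x; simp only [Finset.mem_filter, Finset.mem_range, Finset.mem_Icc, max_le_iff]; omega
  calc ∑ l ∈ Finset.range (N+1), sgn i l j * g l
      = ∑ l ∈ Finset.range (N+1), ((if l < min i j then g l else 0)
          - (if max i j ≤ l then g l else 0)) := by
        apply Finset.sum_congr rfl; intro l _
        rw [hsgn]
        split_ifs <;> ring
    _ = _ := by
        rw [Finset.sum_sub_distrib, ← Finset.sum_filter, ← Finset.sum_filter, h1, h2]

lemma reindex1 (g : ℤ → ℂ) (N m : ℕ) (hm : m ≤ N) :
    ∑ l ∈ Finset.range m, g ((N:ℤ) - l) = ∑ u ∈ Finset.Icc ((N:ℤ) - m + 1) N, g u := by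
  refine Finset.sum_nbij' (i := fun l => (N:ℤ) - l) (j := fun u => ((N:ℤ) - u).toNat)
    ?_ ?_ ?_ ?_ ?_
  · intro l hl; simp only [Finset.mem_range] at hl; simp only [Finset.mem_Icc]; omega
  · intro u hu; simp only [Finset.mem_Icc] at hu; simp only [Finset.mem_range]; omega
  · intro l hl; simp only [Finset.mem_range] at hl; omega
  · intro u hu; simp only [Finset.mem_Icc] at hu; omega
  · intro l _; rfl

lemma reindex2 (g : ℤ → ℂ) (N m : ℕ) (hm : m ≤ N) :
    ∑ l ∈ Finset.Icc m N, g ((N:ℤ) - l) = ∑ u ∈ Finset.Icc (0:ℤ) ((N:ℤ) - m), g u := by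
  refine Finset.sum_nbij' (i := fun l => (N:ℤ) - l) (j := fun u => ((N:ℤ) - u).toNat)
    ?_ ?_ ?_ ?_ ?_
  · intro l hl; simp only [Finset.mem_Icc] at hl; simp only [Finset.mem_Icc]; omega
  · intro u hu; simp only [Finset.mem_Icc] at hu; simp only [Finset.mem_Icc]; omega
  · intro l hl; simp only [Finset.mem_Icc] at hl; omega
  · intro u hu; simp only [Finset.mem_Icc] at hu; omega
  · intro l _; rfl

lemma esym_toE (N : ℕ) (a : ℕ → ℂ) (l : ℕ) (hl : l ≤ N) :
    esym (Finset.Icc 1 N) a (N - l) = Ez N a ((N:ℤ) - l) := by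
  rw [Ez, if_pos (by omega)]
  congr 1
  omega

lemma esym_toF (N : ℕ) (a : ℕ → ℂ) (q i : ℕ) (hi : i ≤ N) :
    esym ((Finset.Icc 1 N).erase q) a (N - i) = Fz N a q ((N:ℤ) - i) := by
  rw [Fz, if_pos (by omega)]
  congr 1
  omega

lemma npow_to_zpow (n : ℕ) : (-1:ℂ) ^ n = (-1:ℂ) ^ (n:ℤ) := (zpow_natCast _ _).symm

end aux2

section aux3
open Finset

lemma sigma_part (N : ℕ) (a : ℕ → ℂ) (s t : ℤ) :
    ∑ u ∈ Finset.Icc 0 (min s t), Ez N a u * Ez N a (s + t + 1 - u)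
      = ∑ u ∈ Finset.Icc (max s t + 1) N, Ez N a u * Ez N a (s + t + 1 - u) := by
  have h := key (Ez N a) N (s+t+1) (min s t) (Ez_neg N a) (Ez_big N a)
  rw [show s + t + 1 - min s t = max s t + 1 by omega] at h
  exact h

lemma bracketA (N : ℕ) (a : ℕ → ℂ) (q : ℕ) (hq : q ∈ Finset.Icc 1 N) (s t : ℤ)
    (hs : 0 ≤ s) (ht : 0 ≤ t) :
    ∑ u ∈ Finset.Icc 0 (min s t), Ez N a u * Fz N a q (s + t - u)
      - ∑ u ∈ Finset.Icc (max s t + 1) N, Ez N a u * Fz N a q (s + t - u)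
      = Fz N a q s * Fz N a q t := by
  have expand : ∀ S : Finset ℤ, ∑ u ∈ S, Ez N a u * Fz N a q (s + t - u)
      = (∑ u ∈ S, Fz N a q u * Fz N a q (s + t - u))
        + a q * ∑ u ∈ S, Fz N a q (u-1) * Fz N a q (s + t - u) := by
    intro S
    rw [Finset.mul_sum, ← Finset.sum_add_distrib]
    apply Finset.sum_congr rfl
    intro u _
    rw [Ez_rec N a q hq u]; ring
  have h2 : ∑ u ∈ Finset.Icc (0:ℤ) (min s t), Fz N a q (u-1) * Fz N a q (s + t - u)
      = ∑ u ∈ Finset.Icc (max s t + 1) N, Fz N a q (u-1) * Fz N a q (s + t - u) := by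
    have h := key (fun u => Fz N a q (u-1)) N (s+t+1) (min s t)
      (fun v hv => Fz_neg N a q (v-1) (by omega))
      (fun v hv => Fz_big N a q (v-1) hq (by omega))
    calc ∑ u ∈ Finset.Icc (0:ℤ) (min s t), Fz N a q (u-1) * Fz N a q (s + t - u)
        = ∑ u ∈ Finset.Icc (0:ℤ) (min s t), Fz N a q (u-1) * Fz N a q (s+t+1-u-1) := by
          apply Finset.sum_congr rfl; intro u _
          rw [show s+t+1-u-1 = s+t-u by ring]
      _ = ∑ u ∈ Finset.Icc (s+t+1-min s t) (N:ℤ), Fz N a q (u-1) * Fz N a q (s+t+1-u-1) := h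
      _ = _ := by
          rw [show s+t+1-min s t = max s t + 1 by omega]
          apply Finset.sum_congr rfl; intro u _
          rw [show s+t+1-u-1 = s+t-u by ring]
  have h1 : ∑ u ∈ Finset.Icc (0:ℤ) (min s t - 1), Fz N a q u * Fz N a q (s + t - u)
      = ∑ u ∈ Finset.Icc (max s t + 1) N, Fz N a q u * Fz N a q (s + t - u) := by
    have h := key (Fz N a q) N (s+t) (min s t - 1) (Fz_neg N a q)
      (fun v hv => Fz_big N a q v hq (by omega))
    rw [show s + t - (min s t - 1) = max s t + 1 by omega] at h
    exact h
  have hsplit : Finset.Icc (0:ℤ) (min s t)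
      = insert (min s t) (Finset.Icc 0 (min s t - 1)) := by
    ext x; simp only [Finset.mem_Icc, Finset.mem_insert]; omega
  have hmm : Fz N a q (min s t) * Fz N a q (s + t - min s t)
      = Fz N a q s * Fz N a q t := by
    rcases le_total s t with h | h
    · rw [min_eq_left h, show s + t - s = t by ring]
    · rw [min_eq_right h, show s + t - t = s by ring]; ring
  rw [expand, expand, h2, hsplit,
    Finset.sum_insert (by simp only [Finset.mem_Icc]; omega), h1, hmm]
  ring

end aux3

section aux4
open Finset

lemma neg_one_ne : (-1:ℂ) ≠ 0 := by norm_num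

lemma G2lem (N : ℕ) (a : ℕ → ℂ) (i j : ℕ) (hi : i ∈ Finset.Icc 1 N)
    (hj : j ∈ Finset.Icc 1 N) :
    ∑ l ∈ Finset.range (N+1),
      ((((-1:ℂ)^((N:ℤ)-(l:ℤ)-1)) * esym (Finset.Icc 1 N) a (N-l)) * sgn i l j)
        * ((-1:ℂ)^((N:ℤ)-((i:ℤ)+(j:ℤ)-(l:ℤ)-1)) * Ez N a ((N:ℤ)-((i:ℤ)+(j:ℤ)-(l:ℤ)-1)))
      = 0 := by
  obtain ⟨hi1, hi2⟩ := Finset.mem_Icc.1 hi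
  obtain ⟨hj1, hj2⟩ := Finset.mem_Icc.1 hj
  have hterm : ∀ l ∈ Finset.range (N+1),
      ((((-1:ℂ)^((N:ℤ)-(l:ℤ)-1)) * esym (Finset.Icc 1 N) a (N-l)) * sgn i l j)
        * ((-1:ℂ)^((N:ℤ)-((i:ℤ)+(j:ℤ)-(l:ℤ)-1)) * Ez N a ((N:ℤ)-((i:ℤ)+(j:ℤ)-(l:ℤ)-1)))
      = sgn i l j * ((-1:ℂ)^(2*(N:ℤ)-(i:ℤ)-(j:ℤ))
          * (Ez N a ((N:ℤ)-(l:ℤ))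
             * Ez N a ((N:ℤ)-(i:ℤ) + ((N:ℤ)-(j:ℤ)) + 1 - ((N:ℤ)-(l:ℤ))))) := by
    intro l hl
    simp only [Finset.mem_range] at hl
    rw [esym_toE N a l (by omega)]
    rw [show (N:ℤ)-((i:ℤ)+(j:ℤ)-(l:ℤ)-1)
        = (N:ℤ)-(i:ℤ) + ((N:ℤ)-(j:ℤ)) + 1 - ((N:ℤ)-(l:ℤ)) by ring]
    rw [show 2*(N:ℤ)-(i:ℤ)-(j:ℤ)
        = ((N:ℤ)-(l:ℤ)-1) + ((N:ℤ)-(i:ℤ) + ((N:ℤ)-(j:ℤ)) + 1 - ((N:ℤ)-(l:ℤ))) by ring,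
      zpow_add₀ neg_one_ne]
    ring
  rw [Finset.sum_congr rfl hterm, sgn_split N i j hi hj]
  rw [reindex1 (fun u => (-1:ℂ)^(2*(N:ℤ)-(i:ℤ)-(j:ℤ))
        * (Ez N a u * Ez N a ((N:ℤ)-(i:ℤ) + ((N:ℤ)-(j:ℤ)) + 1 - u))) N (min i j) (by omega),
    reindex2 (fun u => (-1:ℂ)^(2*(N:ℤ)-(i:ℤ)-(j:ℤ))
        * (Ez N a u * Ez N a ((N:ℤ)-(i:ℤ) + ((N:ℤ)-(j:ℤ)) + 1 - u))) N (max i j) (by omega)]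
  rw [show (N:ℤ) - (min i j : ℕ) + 1 = max ((N:ℤ)-(i:ℤ)) ((N:ℤ)-(j:ℤ)) + 1 by omega,
    show (N:ℤ) - (max i j : ℕ) = min ((N:ℤ)-(i:ℤ)) ((N:ℤ)-(j:ℤ)) by omega]
  rw [← Finset.mul_sum, ← Finset.mul_sum, ← sigma_part N a ((N:ℤ)-(i:ℤ)) ((N:ℤ)-(j:ℤ))]
  ring

lemma G1lem (N : ℕ) (a : ℕ → ℂ) (i j q : ℕ) (hi : i ∈ Finset.Icc 1 N)
    (hj : j ∈ Finset.Icc 1 N) (hq : q ∈ Finset.Icc 1 N) :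
    ∑ l ∈ Finset.range (N+1),
      ((((-1:ℂ)^((N:ℤ)-(l:ℤ)-1)) * esym (Finset.Icc 1 N) a (N-l)) * sgn i l j)
        * ((-1:ℂ)^((N:ℤ)-((i:ℤ)+(j:ℤ)-(l:ℤ)-1)-1)
            * Fz N a q ((N:ℤ)-((i:ℤ)+(j:ℤ)-(l:ℤ)-1)-1))
      = ((-1:ℂ)^((N:ℤ)-(i:ℤ)) * Fz N a q ((N:ℤ)-(i:ℤ)))
          * ((-1:ℂ)^((N:ℤ)-(j:ℤ)) * Fz N a q ((N:ℤ)-(j:ℤ))) := by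
  obtain ⟨hi1, hi2⟩ := Finset.mem_Icc.1 hi
  obtain ⟨hj1, hj2⟩ := Finset.mem_Icc.1 hj
  have hterm : ∀ l ∈ Finset.range (N+1),
      ((((-1:ℂ)^((N:ℤ)-(l:ℤ)-1)) * esym (Finset.Icc 1 N) a (N-l)) * sgn i l j)
        * ((-1:ℂ)^((N:ℤ)-((i:ℤ)+(j:ℤ)-(l:ℤ)-1)-1)
            * Fz N a q ((N:ℤ)-((i:ℤ)+(j:ℤ)-(l:ℤ)-1)-1))
      = sgn i l j * ((-1:ℂ)^(2*(N:ℤ)-(i:ℤ)-(j:ℤ)-1)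
          * (Ez N a ((N:ℤ)-(l:ℤ))
             * Fz N a q ((N:ℤ)-(i:ℤ) + ((N:ℤ)-(j:ℤ)) - ((N:ℤ)-(l:ℤ))))) := by
    intro l hl
    simp only [Finset.mem_range] at hl
    rw [esym_toE N a l (by omega)]
    rw [show (N:ℤ)-((i:ℤ)+(j:ℤ)-(l:ℤ)-1)-1
        = (N:ℤ)-(i:ℤ) + ((N:ℤ)-(j:ℤ)) - ((N:ℤ)-(l:ℤ)) by ring]
    rw [show 2*(N:ℤ)-(i:ℤ)-(j:ℤ)-1
        = ((N:ℤ)-(l:ℤ)-1) + ((N:ℤ)-(i:ℤ) + ((N:ℤ)-(j:ℤ)) - ((N:ℤ)-(l:ℤ))) by ring,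
      zpow_add₀ neg_one_ne]
    ring
  rw [Finset.sum_congr rfl hterm, sgn_split N i j hi hj]
  rw [reindex1 (fun u => (-1:ℂ)^(2*(N:ℤ)-(i:ℤ)-(j:ℤ)-1)
        * (Ez N a u * Fz N a q ((N:ℤ)-(i:ℤ) + ((N:ℤ)-(j:ℤ)) - u))) N (min i j) (by omega),
    reindex2 (fun u => (-1:ℂ)^(2*(N:ℤ)-(i:ℤ)-(j:ℤ)-1)
        * (Ez N a u * Fz N a q ((N:ℤ)-(i:ℤ) + ((N:ℤ)-(j:ℤ)) - u))) N (max i j) (by omega)]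
  rw [show (N:ℤ) - (min i j : ℕ) + 1 = max ((N:ℤ)-(i:ℤ)) ((N:ℤ)-(j:ℤ)) + 1 by omega,
    show (N:ℤ) - (max i j : ℕ) = min ((N:ℤ)-(i:ℤ)) ((N:ℤ)-(j:ℤ)) by omega]
  rw [← Finset.mul_sum, ← Finset.mul_sum]
  have hb := bracketA N a q hq ((N:ℤ)-(i:ℤ)) ((N:ℤ)-(j:ℤ)) (by omega) (by omega)
  have hK : (-1:ℂ)^((N:ℤ)-(i:ℤ)) * (-1:ℂ)^((N:ℤ)-(j:ℤ))
      = -(-1:ℂ)^(2*(N:ℤ)-(i:ℤ)-(j:ℤ)-1) := by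
    rw [← zpow_add₀ neg_one_ne,
      show ((N:ℤ)-(i:ℤ)) + ((N:ℤ)-(j:ℤ)) = (2*(N:ℤ)-(i:ℤ)-(j:ℤ)-1)+1 by ring,
      zpow_add₀ neg_one_ne, zpow_one]
    ring
  linear_combination (-((-1:ℂ)^(2*(N:ℤ)-(i:ℤ)-(j:ℤ)-1))) * hb
    + (-(Fz N a q ((N:ℤ)-(i:ℤ)) * Fz N a q ((N:ℤ)-(j:ℤ)))) * hK

end aux4

section aux5
open Finset

lemma LB (N d : ℕ) (a : ℕ → ℂ) (σ : Matrix (Fin d) (Fin d) ℂ)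
    (A : ℕ → Matrix (Fin d) (Fin d) ℂ) (B : ℤ → Matrix (Fin d) (Fin d) ℂ)
    (hB : ∀ l : ℕ, l < N → B l =
      (-1 : ℂ) ^ (N - l - 1) •
          (∑ i ∈ Finset.Icc 1 N, esym ((Finset.Icc 1 N).erase i) a (N - l - 1) • A i)
        + ((-1 : ℂ) ^ (N - l) * esym (Finset.Icc 1 N) a (N - l)) • σ)
    (hBN : B N = σ)
    (hBneg : ∀ m : ℤ, m < 0 → B m = 0)
    (hBbig : ∀ m : ℤ, (N : ℤ) < m → B m = 0) (p : ℤ) :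
    B p = (∑ q ∈ Finset.Icc 1 N, ((-1:ℂ)^((N:ℤ)-p-1) * Fz N a q ((N:ℤ)-p-1)) • A q)
      + ((-1:ℂ)^((N:ℤ)-p) * Ez N a ((N:ℤ)-p)) • σ := by
  rcases lt_or_ge p 0 with hp | hp
  · rw [hBneg p hp]
    have h1 : ∀ q ∈ Finset.Icc 1 N,
        ((-1:ℂ)^((N:ℤ)-p-1) * Fz N a q ((N:ℤ)-p-1)) • A q = 0 := by
      intro q hq
      rw [Fz_big N a q _ hq (by omega), mul_zero, zero_smul]
    rw [Finset.sum_congr rfl h1, Finset.sum_const_zero,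
      Ez_big N a _ (by omega), mul_zero, zero_smul, add_zero]
  rcases lt_or_ge (N:ℤ) p with hp2 | hp2
  · rw [hBbig p hp2]
    have h1 : ∀ q ∈ Finset.Icc 1 N,
        ((-1:ℂ)^((N:ℤ)-p-1) * Fz N a q ((N:ℤ)-p-1)) • A q = 0 := by
      intro q _
      rw [Fz_neg N a q _ (by omega), mul_zero, zero_smul]
    rw [Finset.sum_congr rfl h1, Finset.sum_const_zero,
      Ez_neg N a _ (by omega), mul_zero, zero_smul, add_zero]
  rcases eq_or_lt_of_le hp2 with he | hlt
  · rw [he, hBN]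
    have h1 : ∀ q ∈ Finset.Icc 1 N,
        ((-1:ℂ)^((N:ℤ)-(N:ℤ)-1) * Fz N a q ((N:ℤ)-(N:ℤ)-1)) • A q = 0 := by
      intro q _
      rw [Fz_neg N a q _ (by omega), mul_zero, zero_smul]
    rw [Finset.sum_congr rfl h1, Finset.sum_const_zero, zero_add]
    rw [show (N:ℤ)-(N:ℤ) = 0 by omega, zpow_zero]
    rw [show Ez N a 0 = 1 from by rw [Ez, if_pos le_rfl]; exact esym_zero _ _]
    rw [mul_one, one_smul]
  · have hl : p.toNat < N := by omega
    have hp' : p = (p.toNat : ℤ) := by omega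
    rw [hp', hB p.toNat hl]
    congr 1
    · rw [Finset.smul_sum]
      apply Finset.sum_congr rfl
      intro q _
      rw [smul_smul]
      congr 1
      rw [npow_to_zpow, show ((N - p.toNat - 1 : ℕ):ℤ) = (N:ℤ)-(p.toNat:ℤ)-1 by omega,
        show (N - p.toNat - 1 : ℕ) = N - (p.toNat + 1) by omega,
        esym_toF N a q (p.toNat + 1) (by omega),
        show (N:ℤ)-((p.toNat + 1 : ℕ):ℤ) = (N:ℤ)-(p.toNat:ℤ)-1 by push_cast; ring]
    · congr 1
      rw [npow_to_zpow, show ((N - p.toNat : ℕ):ℤ) = (N:ℤ)-(p.toNat:ℤ) by omega,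
        esym_toE N a p.toNat (by omega)]

lemma PiL_eq (N d : ℕ) (B : ℤ → Matrix (Fin d) (Fin d) ℂ) (l : ℕ) (hl : l ≤ N)
    (ξ : ℕ → Matrix (Fin d) (Fin d) ℂ) (i : ℕ) (hi : i ∈ Finset.Icc 1 N) :
    PiL N d B l ξ i
      = ∑ j ∈ Finset.Icc 1 N, sgn i l j • cm (B ((i:ℤ) + (j:ℤ) - (l:ℤ) - 1)) (ξ j) := by
  have hsplit : Finset.Icc 1 N = Finset.Icc 1 l ∪ Finset.Icc (l+1) N := by
    ext x; simp only [Finset.mem_union, Finset.mem_Icc]; omega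
  have hdisj : Disjoint (Finset.Icc 1 l) (Finset.Icc (l+1) N) := by
    rw [Finset.disjoint_left]; intro x hx hx'
    simp only [Finset.mem_Icc] at hx hx'; omega
  rw [PiL, hsplit, Finset.sum_union hdisj]
  split_ifs with h
  · have e1 : ∀ j ∈ Finset.Icc 1 l, sgn i l j • cm (B ((i:ℤ)+(j:ℤ)-(l:ℤ)-1)) (ξ j)
        = -cm (B ((i:ℤ)+(j:ℤ)-(l:ℤ)-1)) (ξ j) := by
      intro j hj; simp only [Finset.mem_Icc] at hj
      rw [show sgn i l j = -1 from by unfold sgn; rw [if_pos h, if_pos hj.2]]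
      rw [neg_smul, one_smul]
    have e2 : ∀ j ∈ Finset.Icc (l+1) N, sgn i l j • cm (B ((i:ℤ)+(j:ℤ)-(l:ℤ)-1)) (ξ j)
        = 0 := by
      intro j hj; simp only [Finset.mem_Icc] at hj
      rw [show sgn i l j = 0 from by unfold sgn; rw [if_pos h, if_neg (by omega)], zero_smul]
    rw [Finset.sum_congr rfl e1, Finset.sum_congr rfl e2, Finset.sum_const_zero, add_zero]
    rw [Finset.sum_neg_distrib]
  · have e1 : ∀ j ∈ Finset.Icc 1 l, sgn i l j • cm (B ((i:ℤ)+(j:ℤ)-(l:ℤ)-1)) (ξ j)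
        = 0 := by
      intro j hj; simp only [Finset.mem_Icc] at hj
      rw [show sgn i l j = 0 from by unfold sgn; rw [if_neg h, if_neg (by omega)], zero_smul]
    have e2 : ∀ j ∈ Finset.Icc (l+1) N, sgn i l j • cm (B ((i:ℤ)+(j:ℤ)-(l:ℤ)-1)) (ξ j)
        = cm (B ((i:ℤ)+(j:ℤ)-(l:ℤ)-1)) (ξ j) := by
      intro j hj; simp only [Finset.mem_Icc] at hj
      rw [show sgn i l j = 1 from by unfold sgn; rw [if_neg h, if_pos (by omega)], one_smul]
    rw [Finset.sum_congr rfl e1, Finset.sum_congr rfl e2, Finset.sum_const_zero, zero_add]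
    refine Finset.sum_nbij' (i := fun j => j + l) (j := fun j => j - l) ?_ ?_ ?_ ?_ ?_
    · intro x hx; simp only [Finset.mem_Icc] at hx ⊢; omega
    · intro x hx; simp only [Finset.mem_Icc] at hx ⊢; omega
    · intro x hx; simp only [Finset.mem_Icc] at hx; omega
    · intro x hx; simp only [Finset.mem_Icc] at hx; omega
    · intro x hx; simp only [Finset.mem_Icc] at hx
      congr 2
      push_cast; ring

end aux5


/-- The diagonal Lie–Poisson tensor `P`, pushed forward by the linear change of
variables with Jacobian `J_{ij} = (−1)^{N−i} s_{N−i}(a_1, …, â_j, …, a_N)`, equals the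
combination `Σ_{l=0}^N (−1)^{N−l−1} s_{N−l}(a_1, …, a_N) Π_l` of the RSTS tensors:
for every tuple `ξ` and `i ∈ {1, …, N}`,
`Σ_{l=0}^N (−1)^{N−l−1} s_{N−l}(a) (Π_l ξ)_i = Σ_{j=1}^N J_{ij} [A_j, Σ_{m=1}^N J_{mj} ξ_m]`. -/
theorem stmt8 (N d : ℕ) (hN : 1 ≤ N) (a : ℕ → ℂ)
    (ha : ∀ i ∈ Finset.Icc 1 N, ∀ j ∈ Finset.Icc 1 N, i ≠ j → a i ≠ a j)
    (σ : Matrix (Fin d) (Fin d) ℂ) (A : ℕ → Matrix (Fin d) (Fin d) ℂ)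
    (B : ℤ → Matrix (Fin d) (Fin d) ℂ)
    (hB : ∀ l : ℕ, l < N → B l =
      (-1 : ℂ) ^ (N - l - 1) •
          (∑ i ∈ Finset.Icc 1 N, esym ((Finset.Icc 1 N).erase i) a (N - l - 1) • A i)
        + ((-1 : ℂ) ^ (N - l) * esym (Finset.Icc 1 N) a (N - l)) • σ)
    (hBN : B N = σ)
    (hBneg : ∀ m : ℤ, m < 0 → B m = 0)
    (hBbig : ∀ m : ℤ, (N : ℤ) < m → B m = 0)
    (J : ℕ → ℕ → ℂ)
    (hJ : ∀ i j, J i j = (-1 : ℂ) ^ (N - i) * esym ((Finset.Icc 1 N).erase j) a (N - i)) :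
    ∀ ξ : ℕ → Matrix (Fin d) (Fin d) ℂ, ∀ i ∈ Finset.Icc 1 N,
      ∑ l ∈ Finset.range (N + 1),
          (((-1 : ℂ) ^ ((N : ℤ) - (l : ℤ) - 1)) * esym (Finset.Icc 1 N) a (N - l)) •
            PiL N d B l ξ i =
        ∑ j ∈ Finset.Icc 1 N, J i j • cm (A j) (∑ m ∈ Finset.Icc 1 N, J m j • ξ m) := by
  intro ξ i hi
  have hJc : ∀ m ∈ Finset.Icc 1 N, ∀ q : ℕ,
      J m q = (-1:ℂ)^((N:ℤ)-(m:ℤ)) * Fz N a q ((N:ℤ)-(m:ℤ)) := by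
    intro m hm q
    obtain ⟨hm1, hm2⟩ := Finset.mem_Icc.1 hm
    rw [hJ, npow_to_zpow, show ((N-m:ℕ):ℤ) = (N:ℤ)-(m:ℤ) by omega, esym_toF N a q m hm2]
  have L1 : ∀ l ∈ Finset.range (N+1),
      (((-1 : ℂ) ^ ((N : ℤ) - (l : ℤ) - 1)) * esym (Finset.Icc 1 N) a (N - l)) •
        PiL N d B l ξ i
      = ∑ j ∈ Finset.Icc 1 N,
          ((((-1 : ℂ) ^ ((N : ℤ) - (l : ℤ) - 1)) * esym (Finset.Icc 1 N) a (N - l))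
            * sgn i l j) • cm (B ((i:ℤ)+(j:ℤ)-(l:ℤ)-1)) (ξ j) := by
    intro l hl
    simp only [Finset.mem_range] at hl
    rw [PiL_eq N d B l (by omega) ξ i hi, Finset.smul_sum]
    apply Finset.sum_congr rfl
    intro j _
    rw [smul_smul]
  rw [Finset.sum_congr rfl L1]
  have R1 : ∀ j ∈ Finset.Icc 1 N, J i j • cm (A j) (∑ m ∈ Finset.Icc 1 N, J m j • ξ m)
      = ∑ m ∈ Finset.Icc 1 N, (J i j * J m j) • cm (A j) (ξ m) := by
    intro j _
    rw [cm_sum_smul_right, Finset.smul_sum]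
    apply Finset.sum_congr rfl
    intro m _
    rw [smul_smul]
  rw [Finset.sum_congr rfl R1]
  conv_lhs => rw [Finset.sum_comm]
  conv_rhs => rw [Finset.sum_comm]
  apply Finset.sum_congr rfl
  intro j hj
  rw [← cm_sum_smul_left, ← cm_sum_smul_left]
  congr 1
  calc ∑ l ∈ Finset.range (N+1),
        ((((-1 : ℂ) ^ ((N : ℤ) - (l : ℤ) - 1)) * esym (Finset.Icc 1 N) a (N - l))
          * sgn i l j) • B ((i:ℤ)+(j:ℤ)-(l:ℤ)-1)
      = ∑ l ∈ Finset.range (N+1),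
          ((∑ q ∈ Finset.Icc 1 N,
              (((((-1 : ℂ) ^ ((N : ℤ) - (l : ℤ) - 1)) * esym (Finset.Icc 1 N) a (N - l))
                  * sgn i l j)
                * ((-1:ℂ)^((N:ℤ)-((i:ℤ)+(j:ℤ)-(l:ℤ)-1)-1)
                    * Fz N a q ((N:ℤ)-((i:ℤ)+(j:ℤ)-(l:ℤ)-1)-1))) • A q)
            + (((((-1 : ℂ) ^ ((N : ℤ) - (l : ℤ) - 1)) * esym (Finset.Icc 1 N) a (N - l))
                  * sgn i l j)
                * ((-1:ℂ)^((N:ℤ)-((i:ℤ)+(j:ℤ)-(l:ℤ)-1))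
                    * Ez N a ((N:ℤ)-((i:ℤ)+(j:ℤ)-(l:ℤ)-1)))) • σ) := by
        apply Finset.sum_congr rfl
        intro l _
        rw [LB N d a σ A B hB hBN hBneg hBbig ((i:ℤ)+(j:ℤ)-(l:ℤ)-1), smul_add,
          Finset.smul_sum]
        congr 1
        · apply Finset.sum_congr rfl; intro q _; rw [smul_smul]
        · rw [smul_smul]
    _ = (∑ q ∈ Finset.Icc 1 N,
          (∑ l ∈ Finset.range (N+1),
            ((((-1 : ℂ) ^ ((N : ℤ) - (l : ℤ) - 1)) * esym (Finset.Icc 1 N) a (N - l))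
                * sgn i l j)
              * ((-1:ℂ)^((N:ℤ)-((i:ℤ)+(j:ℤ)-(l:ℤ)-1)-1)
                  * Fz N a q ((N:ℤ)-((i:ℤ)+(j:ℤ)-(l:ℤ)-1)-1))) • A q)
        + (∑ l ∈ Finset.range (N+1),
            ((((-1 : ℂ) ^ ((N : ℤ) - (l : ℤ) - 1)) * esym (Finset.Icc 1 N) a (N - l))
                * sgn i l j)
              * ((-1:ℂ)^((N:ℤ)-((i:ℤ)+(j:ℤ)-(l:ℤ)-1))
                  * Ez N a ((N:ℤ)-((i:ℤ)+(j:ℤ)-(l:ℤ)-1)))) • σ := by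
        rw [Finset.sum_add_distrib, Finset.sum_comm]
        congr 1
        · apply Finset.sum_congr rfl; intro q _; rw [Finset.sum_smul]
        · rw [Finset.sum_smul]
    _ = ∑ q ∈ Finset.Icc 1 N, (J i q * J j q) • A q := by
        rw [G2lem N a i j hi hj, zero_smul, add_zero]
        apply Finset.sum_congr rfl
        intro q hq
        rw [G1lem N a i j q hi hj hq, hJc i hi q, hJc j hj q]
end

section
/- Let V and W be complex vector spaces, N ≥ 1, and Π_0, …, Π_N : V → W linear maps. Let κ : ℤ → V and x : ℤ → W be sequences with κ_j = 0 for all j ≤ 0, satisfying Π_l κ_j = x_{j−l} for all l ∈ {0, …, N} and all j ∈ ℤ. Let b_0, b_1, …, b_N be complex numbers with b_1 ≠ 0, and set P = Σ_{l=0}^N b_l Π_l and Q = Σ_{l=1}^N b_l Π_{l−1}. Then: (i) P κ_{j+1} − Q κ_j = b_0 x_{j+1} for every j ∈ ℤ; and (ii) for every j ∈ ℤ there exists f_j in the linear span of {κ_m : m ∈ ℤ} with Q f_j = b_0 x_j (one may take f_j = 0 for j ≤ 0 and f_j = (b_0/b_1) κ_j − (1/b_1) Σ_{i=1}^{N−1}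 b_{i+1} f_{j−i} for j ≥ 1). Consequently, every vector b_0 x_{j+1} = P κ_{j+1} − Q κ_j lies both in the image of P and in the image of Q, i.e. the corresponding vector fields are bihamiltonian with respect to the pair (P, Q). -/
/-! Writing `Π_l κ_j = x_{j-l}` into the pencil gives
`P κ_{j+1} = b_0 x_{j+1} + Σ_{i<N} b_{i+1} x_{j-i}` and `Q κ_{j+1} = b_1 x_{j+1} + Σ_{i<N-1} b_{i+2} x_{j-i}`,
which yields (i) at once. Each of these identities is a linear recurrence expressing `x_{j+1}` through
earlier terms modulo the image of `P` (if `b_0 ≠ 0`), resp. the image under `Q` of the span of the `κ_m`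
(as `b_1 ≠ 0`); since `x` vanishes at nonpositive indices, strong induction puts every `x_j` in these images. -/

open Finset

theorem Submodule.mem_of_recurrence {K W : Type*} [DivisionRing K] [AddCommGroup W] [Module K W]
    (S : Submodule K W) {x : ℤ → W} (hx : ∀ j ≤ 0, x j = 0) {c : K} (hc : c ≠ 0) (d : ℕ → K)
    (M : ℕ) (hrec : ∀ j : ℤ, c • x (j + 1) + ∑ i ∈ range M, d i • x (j - i) ∈ S) (j : ℤ) :
    x j ∈ S := by
  suffices h : ∀ n : ℕ, ∀ j : ℤ, j ≤ n → x j ∈ S from h j.toNat j (Int.self_le_toNat j)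
  intro n
  induction n with
  | zero => exact fun j hj => hx j (mod_cast hj) ▸ S.zero_mem
  | succ n ih =>
    intro j hj
    rcases (show j ≤ n ∨ j = n + 1 by omega) with hjn | rfl
    · exact ih j hjn
    · have hearlier : ∑ i ∈ range M, d i • x (n - i) ∈ S :=
        S.sum_mem fun i _ => S.smul_mem _ (ih _ (by omega))
      exact (S.smul_mem_iff hc).mp ((S.add_mem_iff_left hearlier).mp (hrec n))

section Pencil

variable {K V W : Type*} [CommSemiring K] [AddCommMonoid V] [Module K V] [AddCommMonoid W] [Module K W]
  {N : ℕ} {Pl : ℕ → V →ₗ[K] W} {κ : ℤ → V} {x : ℤ → W}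

theorem sum_smul_apply_succ_of_shift (hrel : ∀ l : ℕ, l ≤ N → ∀ j : ℤ, Pl l (κ j) = x (j - l))
    (b : ℕ → K) (j : ℤ) :
    (∑ l ∈ range (N + 1), b l • Pl l) (κ (j + 1))
      = b 0 • x (j + 1) + ∑ i ∈ range N, b (i + 1) • x (j - i) := by
  rw [sum_range_succ', add_comm, LinearMap.add_apply, LinearMap.sum_apply]
  congr 1
  · simp [hrel 0 N.zero_le]
  · refine sum_congr rfl fun i hi => ?_
    rw [LinearMap.smul_apply, hrel (i + 1) (by simp at hi; omega)]
    congr 2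
    push_cast
    ring

theorem sum_smul_pred_apply_of_shift (hrel : ∀ l : ℕ, l ≤ N → ∀ j : ℤ, Pl l (κ j) = x (j - l))
    (b : ℕ → K) (j : ℤ) :
    (∑ l ∈ Icc 1 N, b l • Pl (l - 1)) (κ j) = ∑ i ∈ range N, b (i + 1) • x (j - i) := by
  simp only [LinearMap.sum_apply, LinearMap.smul_apply]
  rw [← Finset.Ico_add_one_right_eq_Icc, sum_Ico_eq_sum_range, Nat.add_sub_cancel]
  refine sum_congr rfl fun i hi => ?_
  rw [add_comm 1 i, Nat.add_sub_cancel, hrel i (by simp at hi; omega)]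

end Pencil

/-- Abstract bihamiltonian recursion lemma. Given linear maps `Π_0, …, Π_N : V → W`,
sequences `κ : ℤ → V` (vanishing for `j ≤ 0`) and `x : ℤ → W` with
`Π_l κ_j = x_{j−l}` for all `0 ≤ l ≤ N` and all `j`, scalars `b_0, …, b_N` with
`b_1 ≠ 0`, and `P = Σ_{l=0}^N b_l Π_l`, `Q = Σ_{l=1}^N b_l Π_{l−1}`, then:
(i) `P κ_{j+1} − Q κ_j = b_0 x_{j+1}` for all `j`;
(ii) for every `j` there exists `f` in the span of the `κ_m` with `Q f = b_0 x_j`;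
consequently every `b_0 x_{j+1}` lies both in the image of `P` and in the image of `Q`. -/
theorem stmt10 (V W : Type*) [AddCommGroup V] [Module ℂ V] [AddCommGroup W] [Module ℂ W]
    (N : ℕ) (hN : 1 ≤ N) (Pl : ℕ → V →ₗ[ℂ] W) (κ : ℤ → V) (x : ℤ → W)
    (hκ : ∀ j : ℤ, j ≤ 0 → κ j = 0)
    (hrel : ∀ l : ℕ, l ≤ N → ∀ j : ℤ, Pl l (κ j) = x (j - (l : ℤ)))
    (b : ℕ → ℂ) (hb1 : b 1 ≠ 0)
    (P Q : V →ₗ[ℂ] W)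
    (hP : P = ∑ l ∈ Finset.range (N + 1), b l • Pl l)
    (hQ : Q = ∑ l ∈ Finset.Icc 1 N, b l • Pl (l - 1)) :
    (∀ j : ℤ, P (κ (j + 1)) - Q (κ j) = b 0 • x (j + 1))
    ∧ (∀ j : ℤ, ∃ f ∈ Submodule.span ℂ (Set.range κ), Q f = b 0 • x j)
    ∧ (∀ j : ℤ, b 0 • x (j + 1) ∈ LinearMap.range P ∧ b 0 • x (j + 1) ∈ LinearMap.range Q) := by
  have hx : ∀ j ≤ 0, x j = 0 := fun j hj => by simpa [hκ j hj] using (hrel 0 N.zero_le j).symm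
  have hPκ := sum_smul_apply_succ_of_shift hrel b
  have hQκ := sum_smul_pred_apply_of_shift hrel b
  rw [← hP] at hPκ
  rw [← hQ] at hQκ
  obtain ⟨M, rfl⟩ : ∃ M, N = M + 1 := ⟨N - 1, by omega⟩
  have hxQ (j : ℤ) : x j ∈ (Submodule.span ℂ (Set.range κ)).map Q := by
    refine Submodule.mem_of_recurrence _ hx hb1 (fun i => b (i + 2)) M (fun j => ?_) j
    refine Submodule.mem_map.mpr ⟨κ (j + 1), Submodule.subset_span ⟨j + 1, rfl⟩, ?_⟩
    rw [hQκ, sum_range_succ', add_comm]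
    simp
  have hb0xP (j : ℤ) : b 0 • x j ∈ LinearMap.range P := by
    rcases eq_or_ne (b 0) 0 with h0 | h0
    · simp [h0]
    · exact Submodule.smul_mem _ _ ((LinearMap.range P).mem_of_recurrence hx h0
        (fun i => b (i + 1)) (M + 1) (fun j => LinearMap.mem_range.mpr ⟨κ (j + 1), hPκ j⟩) j)
  have hb0xQ (j : ℤ) : b 0 • x j ∈ (Submodule.span ℂ (Set.range κ)).map Q :=
    Submodule.smul_mem _ (b 0) (hxQ j)
  refine ⟨fun j => ?_, hb0xQ, fun j => ⟨hb0xP (j + 1), LinearMap.map_le_range (hb0xQ (j + 1))⟩⟩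
  rw [hPκ, hQκ, add_sub_cancel_right]
end

section
/- Let V, W be vector spaces over a field K, let P, R : V → W be linear maps, c ∈ K, β ≥ 1 an integer, and v_0, v_1, …, v_β ∈ V vectors such that P v_{α−1} = (R − c·P) v_α for every α ∈ {1, …, β}, and P v_β = 0. Define K_β = v_β and, for k = 1, …, β, K_{β−k} = Σ_{j=0}^{k−1} binom(k−1, j) c^{k−j−1} v_{β−j−1}. Then P K_{α−1} = R K_α for every α ∈ {1, …, β}. -/
open Finset

private lemma pascal_shift {K M : Type*} [Field K] [AddCommGroup M] [Module K M]
    (c : K) (x : ℕ → M) (m : ℕ) :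
    ∑ j ∈ range (m+2), ((Nat.choose (m+1) j : K) * c ^ (m+1-j)) • x j
    = c • ∑ j ∈ range (m+1), ((Nat.choose m j : K) * c ^ (m-j)) • x j
      + ∑ j ∈ range (m+1), ((Nat.choose m j : K) * c ^ (m-j)) • x (j+1) := by
  have h1 : ∑ j ∈ range (m+2), ((Nat.choose (m+1) j : K) * c ^ (m+1-j)) • x j
      = ∑ j ∈ range (m+1), ((Nat.choose (m+1) (j+1) : K) * c ^ (m-j)) • x (j+1)
        + (c ^ (m+1)) • x 0 := by
    rw [Finset.sum_range_succ']
    simp [Nat.succ_sub_succ]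
  have h2 : c • ∑ j ∈ range (m+1), ((Nat.choose m j : K) * c ^ (m-j)) • x j
      = ∑ j ∈ range (m+1), ((Nat.choose m (j+1) : K) * c ^ (m-j)) • x (j+1)
        + (c ^ (m+1)) • x 0 := by
    rw [Finset.smul_sum]
    have hc : ∀ j ∈ range (m+1), c • (((Nat.choose m j : K) * c ^ (m-j)) • x j)
        = ((Nat.choose m j : K) * c ^ (m+1-j)) • x j := by
      intro j hj
      rw [mem_range] at hj
      have e : m + 1 - j = (m - j) + 1 := by omega
      rw [e, smul_smul]
      ring_nf
    rw [Finset.sum_congr rfl hc]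
    have h3 : ∑ j ∈ range (m+2), ((Nat.choose m j : K) * c ^ (m+1-j)) • x j
        = ∑ j ∈ range (m+1), ((Nat.choose m j : K) * c ^ (m+1-j)) • x j := by
      rw [Finset.sum_range_succ]
      simp
    rw [← h3, Finset.sum_range_succ']
    simp [Nat.succ_sub_succ]
  rw [h1, h2]
  have h4 : ∀ j ∈ range (m+1), ((Nat.choose (m+1) (j+1) : K) * c ^ (m-j)) • x (j+1)
      = ((Nat.choose m j : K) * c ^ (m-j)) • x (j+1)
        + ((Nat.choose m (j+1) : K) * c ^ (m-j)) • x (j+1) := by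
    intro j _
    rw [Nat.choose_succ_succ]
    push_cast
    rw [add_mul, add_smul]
  rw [Finset.sum_congr rfl h4, Finset.sum_add_distrib]
  abel

/-- Abstract form of the proposition that the binomial combinations
`K_{β−k} = Σ_{j=0}^{k−1} binom(k−1, j) c^{k−j−1} v_{β−j−1}` (with `K_β = v_β`) of vectors
satisfying the modified recursion `P v_{α−1} = (R − cP) v_α` (for `α = 1, …, β`) and
`P v_β = 0` satisfy the standard Lenard–Magri relations `P K_{α−1} = R K_α` for
`α = 1, …, β`. -/
theorem stmt12 {K V W : Type*} [Field K] [AddCommGroup V] [Module K V]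
    [AddCommGroup W] [Module K W]
    (P R : V →ₗ[K] W) (c : K) (β : ℕ) (hβ : 1 ≤ β) (v : ℕ → V)
    (hrec : ∀ α ∈ Finset.Icc 1 β, P (v (α - 1)) = (R - c • P) (v α))
    (hcas : P (v β) = 0)
    (Kv : ℕ → V)
    (hKtop : Kv β = v β)
    (hK : ∀ k ∈ Finset.Icc 1 β, Kv (β - k) =
      ∑ j ∈ Finset.range k, ((Nat.choose (k - 1) j : K) * c ^ (k - j - 1)) • v (β - j - 1)) :
    ∀ α ∈ Finset.Icc 1 β, P (Kv (α - 1)) = R (Kv α) := by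
  intro α hα
  rw [Finset.mem_Icc] at hα
  obtain ⟨hα1, hαβ⟩ := hα
  set f : ℕ → W := fun m => R (v (β - m)) with hf
  set g : ℕ → W := fun m => P (v (β - m)) with hg
  have hg0 : g 0 = 0 := by simp [hg, hcas]
  have hgrec : ∀ j, j < β → g (j+1) = f j - c • g j := by
    intro j hj
    have h := hrec (β - j) (Finset.mem_Icc.mpr ⟨by omega, by omega⟩)
    have e1 : β - j - 1 = β - (j+1) := by omega
    simp only [LinearMap.sub_apply, LinearMap.smul_apply] at h
    rw [e1] at h
    simpa [hf, hg] using h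
  have star : ∀ k, k ≤ β →
      ∑ j ∈ range (k+1), ((Nat.choose k j : K) * c ^ (k-j)) • g j
      = ∑ j ∈ range k, ((Nat.choose (k-1) j : K) * c ^ (k-1-j)) • f j := by
    intro k
    induction k with
    | zero => intro _; simpa using hg0
    | succ m ih =>
      intro hm
      have ihm := ih (by omega)
      rw [show m + 1 + 1 = m + 2 from rfl, pascal_shift]
      have hsub : ∀ j ∈ range (m+1), ((Nat.choose m j : K) * c ^ (m-j)) • g (j+1)
          = ((Nat.choose m j : K) * c ^ (m-j)) • f j
            - c • (((Nat.choose m j : K) * c ^ (m-j)) • g j) := by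
        intro j hj
        rw [mem_range] at hj
        rw [hgrec j (by omega), smul_sub, smul_comm]
      rw [Finset.sum_congr rfl hsub, Finset.sum_sub_distrib, ← Finset.smul_sum]
      simp only [Nat.add_sub_cancel]
      abel
  obtain ⟨k, hk⟩ : ∃ k, k = β - α := ⟨_, rfl⟩
  have hkβ : k < β := by omega
  have hKa1 : Kv (α - 1) = ∑ j ∈ range (k+1), ((Nat.choose k j : K) * c ^ (k-j)) • v (β - j - 1) := by
    have h := hK (k+1) (Finset.mem_Icc.mpr ⟨by omega, by omega⟩)
    have e : β - (k+1) = α - 1 := by omega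
    have e2 : ∀ x : ℕ, k + 1 - x - 1 = k - x := fun x => by omega
    simp only [e2, Nat.add_sub_cancel] at h
    rw [e] at h
    exact h
  have hP : P (Kv (α-1)) = ∑ j ∈ range (k+1), ((Nat.choose k j : K) * c ^ (k-j)) • g (j+1) := by
    rw [hKa1, map_sum]
    refine Finset.sum_congr rfl fun j hj => ?_
    rw [map_smul]
    congr 1
    try simp [hg, Nat.sub_sub]
  rw [hP]
  have hsplit : ∑ j ∈ range (k+1), ((Nat.choose k j : K) * c ^ (k-j)) • g (j+1)
      = ∑ j ∈ range (k+1), ((Nat.choose k j : K) * c ^ (k-j)) • f j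
        - c • ∑ j ∈ range k, ((Nat.choose (k-1) j : K) * c ^ (k-1-j)) • f j := by
    have hsub : ∀ j ∈ range (k+1), ((Nat.choose k j : K) * c ^ (k-j)) • g (j+1)
        = ((Nat.choose k j : K) * c ^ (k-j)) • f j
          - c • (((Nat.choose k j : K) * c ^ (k-j)) • g j) := by
      intro j hj
      rw [mem_range] at hj
      rw [hgrec j (by omega), smul_sub, smul_comm]
    rw [Finset.sum_congr rfl hsub, Finset.sum_sub_distrib, ← Finset.smul_sum,
      star k (by omega)]
  rw [hsplit]
  rcases Nat.eq_zero_or_pos k with hk0 | hkpos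
  · have hαβ' : α = β := by omega
    rw [hαβ', hKtop]
    simp [hk0, hf]
  · obtain ⟨m, rfl⟩ : ∃ m, k = m + 1 := ⟨k - 1, by omega⟩
    have hKα : Kv α = ∑ j ∈ range (m+1), ((Nat.choose m j : K) * c ^ (m-j)) • v (β - j - 1) := by
      have h := hK (m+1) (Finset.mem_Icc.mpr ⟨by omega, by omega⟩)
      have e : β - (m+1) = α := by omega
      have e2 : ∀ x : ℕ, m + 1 - x - 1 = m - x := fun x => by omega
      simp only [e2, Nat.add_sub_cancel] at h
      rw [e] at h
      exact h
    rw [hKα, map_sum]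
    have hR : ∀ j ∈ range (m+1), R (((Nat.choose m j : K) * c ^ (m-j)) • v (β - j - 1))
        = ((Nat.choose m j : K) * c ^ (m-j)) • f (j+1) := by
      intro j _
      rw [map_smul]
      congr 1
      try simp [hf, Nat.sub_sub]
    rw [Finset.sum_congr rfl hR]
    have hps := pascal_shift c f m
    simp only [Nat.add_sub_cancel, show m + 1 + 1 = m + 2 from rfl]
    rw [hps]
    abel
end

section
/- Let A_1, …, A_N be d×d complex matrices and for p = 1, …, N set S_p = Σ_{m=1}^p A_m. Then for all 1 ≤ p ≤ q ≤ N: Σ_{i=1}^N Tr( A_i [ χ(i ≤ p) S_p, χ(i ≤ q) S_q ] ) = 0, where χ(·) is 1 if the condition holds and 0 otherwise, and [X,Y] = XY − YX. This expresses that the bending-flow Hamiltonians I_p = Tr(S_p²) are pairwise in involution with respect to the diagonal Lie–Poisson bracket {F, G}(A_1,…,A_N) = Σ_{i=1}^N Tr(A_i [∇_i F, ∇_i G]), whose gradients are ∇_i I_p = 2 χ(i ≤ p) S_p. -/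
/-- The bending-flow Hamiltonians `I_p = Tr((Σ_{m=1}^p A_m)²)` are pairwise in involution
with respect to the diagonal Lie–Poisson bracket: with `S_p = Σ_{m=1}^p A_m`, for all
`1 ≤ p ≤ q ≤ N`, `Σ_{i=1}^N Tr(A_i [χ(i ≤ p) S_p, χ(i ≤ q) S_q]) = 0`. -/
theorem stmt14 (N d : ℕ) (A : ℕ → Matrix (Fin d) (Fin d) ℂ)
    (p q : ℕ) (hp : 1 ≤ p) (hpq : p ≤ q) (hq : q ≤ N) :
    ∑ i ∈ Finset.Icc 1 N,
        Matrix.trace (A i *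
          cm ((if i ≤ p then (1 : ℂ) else 0) • ∑ m ∈ Finset.Icc 1 p, A m)
             ((if i ≤ q then (1 : ℂ) else 0) • ∑ m ∈ Finset.Icc 1 q, A m)) = 0 := by
  set Sp := ∑ m ∈ Finset.Icc 1 p, A m with hSp
  set Sq := ∑ m ∈ Finset.Icc 1 q, A m with hSq
  have hsub : Finset.Icc 1 p ⊆ Finset.Icc 1 N := by
    apply Finset.Icc_subset_Icc le_rfl (hpq.trans hq)
  have hstep : (∑ i ∈ Finset.Icc 1 N,
      Matrix.trace (A i *
        cm ((if i ≤ p then (1 : ℂ) else 0) • Sp)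
           ((if i ≤ q then (1 : ℂ) else 0) • Sq)))
      = ∑ i ∈ Finset.Icc 1 p, Matrix.trace (A i * cm Sp Sq) := by
    rw [← Finset.sum_subset hsub]
    · apply Finset.sum_congr rfl
      intro i hi
      have hip : i ≤ p := (Finset.mem_Icc.mp hi).2
      have hiq : i ≤ q := hip.trans hpq
      rw [if_pos hip, if_pos hiq, one_smul, one_smul]
    · intro i _ hi
      have hip : ¬ i ≤ p := by
        intro h
        exact hi (Finset.mem_Icc.mpr ⟨(Finset.mem_Icc.mp ‹i ∈ Finset.Icc 1 N›).1, h⟩)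
      rw [if_neg hip, zero_smul]
      simp [cm]
  rw [hstep]
  have : (∑ i ∈ Finset.Icc 1 p, Matrix.trace (A i * cm Sp Sq))
      = Matrix.trace (Sp * cm Sp Sq) := by
    rw [hSp, Finset.sum_mul, Matrix.trace_sum]
  rw [this]
  have : Sp * cm Sp Sq = Sp * Sp * Sq - Sp * Sq * Sp := by
    simp [cm, mul_sub, mul_assoc]
  rw [this, Matrix.trace_sub, Matrix.trace_mul_comm (Sp * Sq) Sp, ← mul_assoc, sub_self]
end

section
/- Let a_1, …, a_N be pairwise distinct complex numbers and A_1, …, A_N d×d complex matrices. For j = 1, …, N define the matrices ∇_m H_j by ∇_m H_j = A_j/(a_j − a_m) for m ≠ j and ∇_j H_j = Σ_{l≠j} A_l/(a_j − a_l) (these are the matrix gradients of the Gaudin Hamiltonians H_j = Σ_{l≠j} Tr(A_j A_l)/(a_j − a_l)). Then for all i, j ∈ {1, …, N}: Σ_{m=1}^N Tr( A_m [ ∇_m H_i, ∇_m H_j ] ) = 0, i.e. the Gaudin Hamiltonians H_1, …, H_N are pairwise in involution with respect to the diagonal Lie–Poisson bracket. -/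
lemma cm_self {R : Type*} [Ring R] (X : R) : cm X X = 0 := by simp [cm]

lemma cm_sum_left {R ι : Type*} [Ring R] (s : Finset ι) (f : ι → R) (Y : R) :
    cm (∑ x ∈ s, f x) Y = ∑ x ∈ s, cm (f x) Y := by
  simp [cm, Finset.sum_mul, Finset.mul_sum, Finset.sum_sub_distrib]

lemma cm_sum_right {R ι : Type*} [Ring R] (s : Finset ι) (f : ι → R) (Y : R) :
    cm Y (∑ x ∈ s, f x) = ∑ x ∈ s, cm Y (f x) := by
  simp [cm, Finset.sum_mul, Finset.mul_sum, Finset.sum_sub_distrib]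

lemma cm_smul_left {d : ℕ} (c : ℂ) (X Y : Matrix (Fin d) (Fin d) ℂ) :
    cm (c • X) Y = c • cm X Y := by
  simp [cm, smul_sub, smul_mul_assoc, mul_smul_comm]

lemma cm_smul_right {d : ℕ} (c : ℂ) (X Y : Matrix (Fin d) (Fin d) ℂ) :
    cm X (c • Y) = c • cm X Y := by
  simp [cm, smul_sub, smul_mul_assoc, mul_smul_comm]

lemma scalar_id (x y z : ℂ) (hxy : x ≠ y) (hxz : x ≠ z) (hyz : y ≠ z) :
    (x - z)⁻¹ * (y - z)⁻¹ - (x - z)⁻¹ * (y - x)⁻¹ - (x - y)⁻¹ * (y - z)⁻¹ = 0 := by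
  have h1 : x - y ≠ 0 := sub_ne_zero.mpr hxy
  have h2 : x - z ≠ 0 := sub_ne_zero.mpr hxz
  have h3 : y - z ≠ 0 := sub_ne_zero.mpr hyz
  have h4 : y - x ≠ 0 := sub_ne_zero.mpr hxy.symm
  field_simp
  ring

/-- The Gaudin Hamiltonians `H_j = Σ_{l≠j} Tr(A_j A_l)/(a_j − a_l)` are pairwise in
involution with respect to the diagonal Lie–Poisson bracket: with the matrix gradients
`∇_m H_j = A_j/(a_j − a_m)` for `m ≠ j` and `∇_j H_j = Σ_{l≠j} A_l/(a_j − a_l)`,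
one has `Σ_{m=1}^N Tr(A_m [∇_m H_i, ∇_m H_j]) = 0` for all `i, j ∈ {1, …, N}`. -/
theorem stmt15 (N d : ℕ) (a : ℕ → ℂ)
    (ha : ∀ i ∈ Finset.Icc 1 N, ∀ j ∈ Finset.Icc 1 N, i ≠ j → a i ≠ a j)
    (A : ℕ → Matrix (Fin d) (Fin d) ℂ)
    (G : ℕ → ℕ → Matrix (Fin d) (Fin d) ℂ)
    (hGoff : ∀ j m, m ≠ j → G j m = (a j - a m)⁻¹ • A j)
    (hGdiag : ∀ j, G j j = ∑ l ∈ (Finset.Icc 1 N).erase j, (a j - a l)⁻¹ • A l) :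
    ∀ i ∈ Finset.Icc 1 N, ∀ j ∈ Finset.Icc 1 N,
      ∑ m ∈ Finset.Icc 1 N, Matrix.trace (A m * cm (G i m) (G j m)) = 0 := by
  intro i hi j hj
  by_cases hij : i = j
  · subst hij
    exact Finset.sum_eq_zero fun m _ => by simp [cm_self]
  have hji : j ≠ i := fun h => hij h.symm
  set S := Finset.Icc 1 N with hS
  set f : ℕ → ℂ := fun m => Matrix.trace (A m * cm (G i m) (G j m)) with hf
  have hjS : j ∈ S.erase i := Finset.mem_erase.mpr ⟨hji, hj⟩
  set R := (S.erase i).erase j with hR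
  -- split the sum: ∑_S f = f i + (f j + ∑_R f)
  have hsplit : ∑ m ∈ S, f m = f i + (f j + ∑ m ∈ R, f m) := by
    rw [← Finset.add_sum_erase S f hi, ← Finset.add_sum_erase (S.erase i) f hjS]
  -- rewrite f i as a sum over R
  have hfi : f i = ∑ m ∈ R, ((a i - a m)⁻¹ * (a j - a i)⁻¹) *
      Matrix.trace (A i * cm (A m) (A j)) := by
    rw [hf]
    simp only [hGdiag i, hGoff j i hij, cm_sum_left, cm_smul_right, cm_smul_left, smul_smul,
      Matrix.mul_sum, mul_smul_comm, Matrix.trace_sum, Matrix.trace_smul, smul_eq_mul]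
    rw [← Finset.add_sum_erase (S.erase i) _ hjS, ← hR]
    rw [show cm (A j) (A j) = 0 from cm_self _]
    simp only [Matrix.mul_zero, Matrix.trace_zero, mul_zero, zero_add]
    refine Finset.sum_congr rfl fun m hm => ?_
    ring
  -- rewrite f j as a sum over R
  have hiR : i ∈ S.erase j := Finset.mem_erase.mpr ⟨hij, hi⟩
  have hfj : f j = ∑ m ∈ R, ((a i - a j)⁻¹ * (a j - a m)⁻¹) *
      Matrix.trace (A j * cm (A i) (A m)) := by
    rw [hf]
    simp only [hGdiag j, hGoff i j hji, cm_sum_right, cm_smul_left, cm_smul_right, smul_smul,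
      Matrix.mul_sum, mul_smul_comm, Matrix.trace_sum, Matrix.trace_smul, smul_eq_mul]
    rw [← Finset.add_sum_erase (S.erase j) _ hiR]
    have hRR : (S.erase j).erase i = R := by
      rw [hR, Finset.erase_right_comm]
    rw [show cm (A i) (A i) = 0 from cm_self _, hRR]
    simp only [Matrix.mul_zero, Matrix.trace_zero, mul_zero, zero_add]
    refine Finset.sum_congr rfl fun m hm => ?_
    ring
  -- pointwise cancellation on R
  have key : ∀ m ∈ R,
      f m + (((a i - a m)⁻¹ * (a j - a i)⁻¹) * Matrix.trace (A i * cm (A m) (A j))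
        + ((a i - a j)⁻¹ * (a j - a m)⁻¹) * Matrix.trace (A j * cm (A i) (A m))) = 0 := by
    intro m hm
    have hmj : m ≠ j := (Finset.mem_erase.mp hm).1
    have hmi : m ≠ i := (Finset.mem_erase.mp (Finset.mem_erase.mp hm).2).1
    have hmS : m ∈ S := (Finset.mem_erase.mp (Finset.mem_erase.mp hm).2).2
    have haij : a i ≠ a j := ha i hi j hj hij
    have haim : a i ≠ a m := ha i hi m hmS (fun h => hmi h.symm)
    have hajm : a j ≠ a m := ha j hj m hmS (fun h => hmj h.symm)
    rw [hf]
    simp only [hGoff i m hmi, hGoff j m hmj, cm_smul_left, cm_smul_right, smul_smul,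
      mul_smul_comm, Matrix.trace_smul, smul_eq_mul]
    have e1 : (A m * cm (A i) (A j)).trace
        = (A m * A i * A j).trace - (A m * A j * A i).trace := by
      simp only [cm, Matrix.mul_sub, Matrix.trace_sub, ← Matrix.mul_assoc]
    have e2 : (A i * cm (A m) (A j)).trace
        = (A m * A j * A i).trace - (A m * A i * A j).trace := by
      simp only [cm, Matrix.mul_sub, Matrix.trace_sub, ← Matrix.mul_assoc]
      rw [Matrix.trace_mul_cycle (A i) (A m) (A j), Matrix.trace_mul_cycle (A j) (A i) (A m),
        Matrix.trace_mul_cycle (A i) (A j) (A m)]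
    have e3 : (A j * cm (A i) (A m)).trace
        = (A m * A j * A i).trace - (A m * A i * A j).trace := by
      simp only [cm, Matrix.mul_sub, Matrix.trace_sub, ← Matrix.mul_assoc]
      rw [Matrix.trace_mul_cycle (A j) (A i) (A m), Matrix.trace_mul_cycle (A j) (A m) (A i),
        Matrix.trace_mul_cycle (A i) (A j) (A m)]
    rw [e1, e2, e3]
    have hz := scalar_id (a i) (a j) (a m) haij haim hajm
    linear_combination ((A m * A i * A j).trace - (A m * A j * A i).trace) * hz
  calc ∑ m ∈ S, f m = f i + (f j + ∑ m ∈ R, f m) := hsplit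
    _ = ∑ m ∈ R, (f m + (((a i - a m)⁻¹ * (a j - a i)⁻¹) * Matrix.trace (A i * cm (A m) (A j))
        + ((a i - a j)⁻¹ * (a j - a m)⁻¹) * Matrix.trace (A j * cm (A i) (A m)))) := by
      rw [hfi, hfj, Finset.sum_add_distrib, Finset.sum_add_distrib]; ring
    _ = 0 := Finset.sum_eq_zero key
end

section
/- Fix N ≥ 2 and consider rational functions of the 2N complex variables (h_1, …, h_N, f_1, …, f_N) on the open set where all f_i ≠ 0, with the Poisson bracket {F, G} = Σ_{i=1}^N f_i (∂F/∂f_i · ∂G/∂h_i − ∂F/∂h_i · ∂G/∂f_i). Define λ_1 = Σ_{i=1}^N f_i, μ_1 = Σ_{i=1}^N h_i, and for a = 2, …, N: λ_a = −(Σ_{k=1}^{a−1} f_k)/f_a + (a−2) and μ_a = (λ_a − (a−2)) h_a + Σ_{k=1}^{a−1} h_k. Then {μ_1, λ_1} = −λ_1 and, for every a = 2, …, N, {μ_a, λ_a} = (λ_a − (a−2))(λ_a − (a−1)). -/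
/-- The Poisson bracket `{F, G} = Σ_i f_i (∂F/∂f_i ∂G/∂h_i − ∂F/∂h_i ∂G/∂f_i)` on
functions of `(h_1, …, h_N, f_1, …, f_N)`; the first component of a point is `h`, the
second is `f`. -/
noncomputable def pb {N : ℕ} (F G : ((Fin N → ℂ) × (Fin N → ℂ)) → ℂ)
    (x : (Fin N → ℂ) × (Fin N → ℂ)) : ℂ :=
  ∑ i, x.2 i *
    (fderiv ℂ F x (0, Pi.single i 1) * fderiv ℂ G x (Pi.single i 1, 0)
      - fderiv ℂ F x (Pi.single i 1, 0) * fderiv ℂ G x (0, Pi.single i 1))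

/-- The Nijenhuis coordinate `λ_a`: `λ_1 = Σ_i f_i` and, for `a = 2, …, N`,
`λ_a = −(Σ_{k=1}^{a−1} f_k)/f_a + (a−2)`. Here the index `a : Fin N` corresponds to the
paper's index `a + 1 ∈ {1, …, N}`. -/
noncomputable def lamF {N : ℕ} (a : Fin N) (x : (Fin N → ℂ) × (Fin N → ℂ)) : ℂ :=
  if (a : ℕ) = 0 then ∑ i, x.2 i
  else -(∑ k ∈ Finset.univ.filter (fun k => k < a), x.2 k) / x.2 a + (((a : ℕ) : ℂ) - 1)

/-- The Nijenhuis coordinate `μ_a`: `μ_1 = Σ_i h_i` and, for `a = 2, …, N`,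
`μ_a = (λ_a − (a−2)) h_a + Σ_{k=1}^{a−1} h_k`. -/
noncomputable def muF {N : ℕ} (a : Fin N) (x : (Fin N → ℂ) × (Fin N → ℂ)) : ℂ :=
  if (a : ℕ) = 0 then ∑ i, x.1 i
  else (lamF a x - (((a : ℕ) : ℂ) - 1)) * x.1 a +
    ∑ k ∈ Finset.univ.filter (fun k => k < a), x.1 k

namespace Stmt16Aux

variable {N : ℕ}

noncomputable def evH (k : Fin N) : ((Fin N → ℂ) × (Fin N → ℂ)) →L[ℂ] ℂ :=
  (ContinuousLinearMap.proj k).comp (ContinuousLinearMap.fst ℂ (Fin N → ℂ) (Fin N → ℂ))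

noncomputable def evF (k : Fin N) : ((Fin N → ℂ) × (Fin N → ℂ)) →L[ℂ] ℂ :=
  (ContinuousLinearMap.proj k).comp (ContinuousLinearMap.snd ℂ (Fin N → ℂ) (Fin N → ℂ))

@[simp] lemma evH_apply (k : Fin N) (v : (Fin N → ℂ) × (Fin N → ℂ)) : evH k v = v.1 k := rfl
@[simp] lemma evF_apply (k : Fin N) (v : (Fin N → ℂ) × (Fin N → ℂ)) : evF k v = v.2 k := rfl

/-- the derivative of `q y = -(∑_{k<a} f_k)/f_a` (as a mul-inv expression). -/
noncomputable def Lq (a : Fin N) (x : (Fin N → ℂ) × (Fin N → ℂ)) :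
    ((Fin N → ℂ) × (Fin N → ℂ)) →L[ℂ] ℂ :=
  (-(∑ k ∈ Finset.univ.filter (fun k => k < a), x.2 k)) • ((-(x.2 a ^ 2)⁻¹) • evF a) +
    (x.2 a)⁻¹ • (-(∑ k ∈ Finset.univ.filter (fun k => k < a), evF k))

lemma hasFDeriv_q (a : Fin N) (x : (Fin N → ℂ) × (Fin N → ℂ)) (hf : x.2 a ≠ 0) :
    HasFDerivAt (fun y : (Fin N → ℂ) × (Fin N → ℂ) =>
        -(∑ k ∈ Finset.univ.filter (fun k => k < a), y.2 k) * (y.2 a)⁻¹)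
      (Lq a x) x := by
  have hc : HasFDerivAt (fun y : (Fin N → ℂ) × (Fin N → ℂ) =>
      -(∑ k ∈ Finset.univ.filter (fun k => k < a), y.2 k))
      (-(∑ k ∈ Finset.univ.filter (fun k => k < a), evF k)) x := by
    have key : (fun y : (Fin N → ℂ) × (Fin N → ℂ) =>
        -(∑ k ∈ Finset.univ.filter (fun k => k < a), y.2 k))
        = ⇑(-(∑ k ∈ Finset.univ.filter (fun k => k < a), evF k)) := by
      funext y; simp
    rw [key]
    exact (-(∑ k ∈ Finset.univ.filter (fun k => k < a), evF k)).hasFDerivAt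
  have hd : HasFDerivAt (fun y : (Fin N → ℂ) × (Fin N → ℂ) => (y.2 a)⁻¹)
      ((-(x.2 a ^ 2)⁻¹) • evF a) x :=
    (hasDerivAt_inv hf).comp_hasFDerivAt x (evF a).hasFDerivAt
  exact hc.mul hd

lemma hasFDeriv_lam (a : Fin N) (ha : (a : ℕ) ≠ 0) (x : (Fin N → ℂ) × (Fin N → ℂ))
    (hf : x.2 a ≠ 0) : HasFDerivAt (lamF a) (Lq a x) x := by
  have key : lamF a = fun y : (Fin N → ℂ) × (Fin N → ℂ) =>
      -(∑ k ∈ Finset.univ.filter (fun k => k < a), y.2 k) * (y.2 a)⁻¹ + (((a : ℕ) : ℂ) - 1) := by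
    funext y; simp [lamF, ha, div_eq_mul_inv]
  rw [key]
  exact (hasFDeriv_q a x hf).add_const _

/-- derivative of `μ_a`. -/
noncomputable def Lmu (a : Fin N) (x : (Fin N → ℂ) × (Fin N → ℂ)) :
    ((Fin N → ℂ) × (Fin N → ℂ)) →L[ℂ] ℂ :=
  (-(∑ k ∈ Finset.univ.filter (fun k => k < a), x.2 k) * (x.2 a)⁻¹) • evH a +
    x.1 a • Lq a x + ∑ k ∈ Finset.univ.filter (fun k => k < a), evH k

lemma hasFDeriv_mu (a : Fin N) (ha : (a : ℕ) ≠ 0) (x : (Fin N → ℂ) × (Fin N → ℂ))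
    (hf : x.2 a ≠ 0) : HasFDerivAt (muF a) (Lmu a x) x := by
  have key : muF a = fun y : (Fin N → ℂ) × (Fin N → ℂ) =>
      (-(∑ k ∈ Finset.univ.filter (fun k => k < a), y.2 k) * (y.2 a)⁻¹) * y.1 a +
        ∑ k ∈ Finset.univ.filter (fun k => k < a), y.1 k := by
    funext y; simp [muF, lamF, ha, div_eq_mul_inv]
  rw [key]
  have h1 : HasFDerivAt (fun y : (Fin N → ℂ) × (Fin N → ℂ) => y.1 a) (evH a) x :=
    (evH a).hasFDerivAt
  have h2 := (hasFDeriv_q a x hf).mul h1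
  have h3 : HasFDerivAt (fun y : (Fin N → ℂ) × (Fin N → ℂ) =>
      ∑ k ∈ Finset.univ.filter (fun k => k < a), y.1 k)
      (∑ k ∈ Finset.univ.filter (fun k => k < a), evH k) x := by
    have key2 : (fun y : (Fin N → ℂ) × (Fin N → ℂ) =>
        ∑ k ∈ Finset.univ.filter (fun k => k < a), y.1 k)
        = ⇑(∑ k ∈ Finset.univ.filter (fun k => k < a), evH k) := by
      funext y; simp
    rw [key2]
    exact (∑ k ∈ Finset.univ.filter (fun k => k < a), evH k).hasFDerivAt
  exact h2.add h3

end Stmt16Aux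

open Stmt16Aux

/-- On the open set where all `f_i ≠ 0`: `{μ_1, λ_1} = −λ_1` and, for `a = 2, …, N`,
`{μ_a, λ_a} = (λ_a − (a−2))(λ_a − (a−1))`. -/
theorem stmt16 (N : ℕ) (hN : 2 ≤ N) (x : (Fin N → ℂ) × (Fin N → ℂ))
    (hx : ∀ i, x.2 i ≠ 0) :
    pb (muF (⟨0, by omega⟩ : Fin N)) (lamF (⟨0, by omega⟩ : Fin N)) x =
        -(lamF (⟨0, by omega⟩ : Fin N) x)
    ∧ ∀ a : Fin N, (a : ℕ) ≠ 0 →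
        pb (muF a) (lamF a) x =
          (lamF a x - (((a : ℕ) : ℂ) - 1)) * (lamF a x - ((a : ℕ) : ℂ)) := by
  constructor
  · -- a = 0 case
    set a0 : Fin N := ⟨0, by omega⟩ with ha0
    have hlam : HasFDerivAt (lamF a0) (∑ i, evF i : _ →L[ℂ] ℂ) x := by
      have key : lamF a0 = ⇑(∑ i : Fin N, evF i) := by
        funext y; simp [lamF, ha0]
      rw [key]; exact (∑ i : Fin N, evF i).hasFDerivAt
    have hmu : HasFDerivAt (muF a0) (∑ i, evH i : _ →L[ℂ] ℂ) x := by
      have key : muF a0 = ⇑(∑ i : Fin N, evH i) := by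
        funext y; simp [muF, ha0]
      rw [key]; exact (∑ i : Fin N, evH i).hasFDerivAt
    rw [pb, hlam.fderiv, hmu.fderiv]
    simp [lamF, ha0, Finset.sum_pi_single']
  · intro a ha
    have hf : x.2 a ≠ 0 := hx a
    rw [pb, (hasFDeriv_lam a ha x hf).fderiv, (hasFDeriv_mu a ha x hf).fderiv]
    set s := Finset.univ.filter (fun k : Fin N => k < a) with hs
    set S := ∑ k ∈ s, x.2 k with hS
    have hanots : a ∉ s := by simp [hs]
    have hsum : ∀ i : Fin N, x.2 i *
        (Lmu a x (0, Pi.single i 1) * Lq a x (Pi.single i 1, 0)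
          - Lmu a x (Pi.single i 1, 0) * Lq a x (0, Pi.single i 1))
        = (if i = a then S ^ 2 * (x.2 a ^ 2)⁻¹ else 0)
          + (if i ∈ s then x.2 i * (x.2 a)⁻¹ else 0) := by
      intro i
      simp only [Lmu, Lq, ContinuousLinearMap.add_apply, ContinuousLinearMap.coe_sum',
        Finset.sum_apply, ContinuousLinearMap.smul_apply, ContinuousLinearMap.neg_apply,
        evF_apply, evH_apply, smul_eq_mul, Pi.single_apply, Finset.sum_ite_eq',
        Finset.mem_filter, Finset.mem_univ, true_and, Finset.sum_const_zero,
        Pi.zero_apply, mul_zero, zero_mul, add_zero, zero_add]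
      have hmem : (i ∈ s) = (i < a) := by simp [hs]
      by_cases hia : i = a
      · subst hia
        simp only [hmem, lt_irrefl, if_false, if_pos rfl, if_neg (lt_irrefl _)]
        field_simp
        simp only [↓reduceIte, hS, hs]
        field_simp
        ring
      · have haia : ¬ (a = i) := fun h => hia h.symm
        by_cases hlt : i < a
        · simp only [hmem, if_neg hia, if_neg haia, if_pos hlt]
          field_simp
          ring
        · simp only [hmem, if_neg hia, if_neg haia, if_neg hlt]
          ring
    rw [Finset.sum_congr rfl (fun i _ => hsum i), Finset.sum_add_distrib]
    rw [Finset.sum_ite_eq' Finset.univ a (fun _ => S ^ 2 * (x.2 a ^ 2)⁻¹)]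
    have h2 : (∑ i : Fin N, if i ∈ s then x.2 i * (x.2 a)⁻¹ else 0)
        = S * (x.2 a)⁻¹ := by
      rw [Finset.sum_ite_mem, Finset.univ_inter, hS, Finset.sum_mul]
    rw [h2]
    have hlamval : lamF a x = -S / x.2 a + (((a : ℕ) : ℂ) - 1) := by
      simp [lamF, ha, hS, hs]
    rw [hlamval]
    simp only [Finset.mem_univ, if_true]
    field_simp
    ring
end

section
/- Fix N ≥ 2 and consider rational functions of the 2N complex variables (h_1, …, h_N, f_1, …, f_N) on the open set where all f_i ≠ 0, with the Poisson bracket {F, G} = Σ_{i=1}^N f_i (∂F/∂f_i · ∂G/∂h_i − ∂F/∂h_i · ∂G/∂f_i). Define λ_1 = Σ_{i=1}^N f_i, μ_1 = Σ_{i=1}^N h_i, and for a = 2, …, N: λ_a = −(Σ_{k=1}^{a−1} f_k)/f_a + (a−2) and μ_a = (λ_a − (a−2)) h_a + Σ_{k=1}^{a−1} h_k. Then for all i, j ∈ {1, …, N}: {λ_i, λ_j} = 0 and {μ_i, μ_j} = 0, and {λ_i, μ_j} = 0 whenever i ≠ j. -/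
namespace Stmt17Aux

open Finset ContinuousLinearMap

variable {N : ℕ}

abbrev Pt (N : ℕ) := (Fin N → ℂ) × (Fin N → ℂ)

noncomputable def projh (i : Fin N) : Pt N →L[ℂ] ℂ :=
  (ContinuousLinearMap.proj i).comp (ContinuousLinearMap.fst ℂ (Fin N → ℂ) (Fin N → ℂ))

noncomputable def projf (i : Fin N) : Pt N →L[ℂ] ℂ :=
  (ContinuousLinearMap.proj i).comp (ContinuousLinearMap.snd ℂ (Fin N → ℂ) (Fin N → ℂ))

@[simp] lemma projh_apply (i : Fin N) (v : Pt N) : projh i v = v.1 i := rfl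
@[simp] lemma projf_apply (i : Fin N) (v : Pt N) : projf i v = v.2 i := rfl

lemma hasF_h (i : Fin N) (x : Pt N) :
    HasFDerivAt (fun y : Pt N => y.1 i) (projh i) x := (projh i).hasFDerivAt

lemma hasF_f (i : Fin N) (x : Pt N) :
    HasFDerivAt (fun y : Pt N => y.2 i) (projf i) x := (projf i).hasFDerivAt

/-- The set of indices `< a`. -/
def Tlt (a : Fin N) : Finset (Fin N) := Finset.univ.filter (fun k => k < a)

lemma mem_Tlt {a i : Fin N} : i ∈ Tlt a ↔ i < a := by simp [Tlt]

/-- `Σ_{k<a} f_k`. -/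
noncomputable def Sf (a : Fin N) (x : Pt N) : ℂ := ∑ k ∈ Tlt a, x.2 k

lemma hasF_Sf (a : Fin N) (x : Pt N) :
    HasFDerivAt (Sf a) (∑ k ∈ Tlt a, projf k) x :=
  HasFDerivAt.fun_sum fun k _ => hasF_f k x

lemma hasF_Sh (a : Fin N) (x : Pt N) :
    HasFDerivAt (fun y => ∑ k ∈ Tlt a, y.1 k) (∑ k ∈ Tlt a, projh k) x :=
  HasFDerivAt.fun_sum fun k _ => hasF_h k x

/-- The derivative of `λ_a` in the `f_i` direction. -/
noncomputable def DfL (a i : Fin N) (x : Pt N) : ℂ :=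
  if (a : ℕ) = 0 then 1
  else if i < a then -(x.2 a)⁻¹ else if i = a then Sf a x / x.2 a ^ 2 else 0

/-- The derivative of `μ_a` in the `h_i` direction. -/
noncomputable def DhM (a i : Fin N) (x : Pt N) : ℂ :=
  if (a : ℕ) = 0 then 1
  else if i < a then 1 else if i = a then -(Sf a x) / x.2 a else 0

/-- The derivative of `μ_a` in the `f_i` direction. -/
noncomputable def DfM (a i : Fin N) (x : Pt N) : ℂ :=
  if (a : ℕ) = 0 then 0 else DfL a i x * x.1 a

section derivs

variable {x : Pt N}

lemma lamF_eq_of_ne (a : Fin N) (ha : (a : ℕ) ≠ 0) :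
    lamF a = fun y : Pt N => -(Sf a y) * (y.2 a)⁻¹ + (((a : ℕ) : ℂ) - 1) := by
  funext y
  simp only [lamF, if_neg ha, Sf, Tlt, div_eq_mul_inv]

lemma hasF_lamF (a : Fin N) (hfa : x.2 a ≠ 0) :
    HasFDerivAt (lamF a)
      (if (a : ℕ) = 0 then ∑ i, projf i
       else (-(Sf a x)) • ((ContinuousLinearMap.smulRight (1 : ℂ →L[ℂ] ℂ)
              (-(x.2 a ^ 2)⁻¹)).comp (projf a))
            + (x.2 a)⁻¹ • (-(∑ k ∈ Tlt a, projf k))) x := by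
  by_cases ha : (a : ℕ) = 0
  · rw [if_pos ha]
    have hEq : lamF a = fun y : Pt N => ∑ i, y.2 i := funext fun y => if_pos ha
    rw [hEq]
    exact HasFDerivAt.fun_sum fun i _ => hasF_f i x
  · rw [if_neg ha, lamF_eq_of_ne a ha]
    have hinv : HasFDerivAt (fun y : Pt N => (y.2 a)⁻¹)
        ((ContinuousLinearMap.smulRight (1 : ℂ →L[ℂ] ℂ) (-(x.2 a ^ 2)⁻¹)).comp (projf a)) x :=
      (hasFDerivAt_inv hfa).comp x (hasF_f a x)
    exact (((hasF_Sf a x).neg).mul hinv).add_const _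

lemma fderiv_lamF_h (a i : Fin N) (hfa : x.2 a ≠ 0) :
    fderiv ℂ (lamF a) x (Pi.single i 1, (0 : Fin N → ℂ)) = 0 := by
  rw [(hasF_lamF a hfa).fderiv]
  by_cases ha : (a : ℕ) = 0 <;>
    simp [ha, ContinuousLinearMap.sum_apply]

lemma sum_ite_Tlt (a i : Fin N) :
    (∑ k ∈ Tlt a, if k = i then (1 : ℂ) else 0) = if i < a then 1 else 0 := by
  rw [Finset.sum_ite_eq' (Tlt a) i (fun _ => (1 : ℂ))]
  simp [mem_Tlt]

lemma DfL_lt {a i : Fin N} (ha : (a : ℕ) ≠ 0) (h : i < a) (x : Pt N) :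
    DfL a i x = -(x.2 a)⁻¹ := by simp [DfL, ha, h]

lemma DfL_self {a : Fin N} (ha : (a : ℕ) ≠ 0) (x : Pt N) :
    DfL a a x = Sf a x / x.2 a ^ 2 := by simp [DfL, ha]

lemma DhM_lt {a i : Fin N} (ha : (a : ℕ) ≠ 0) (h : i < a) (x : Pt N) :
    DhM a i x = 1 := by simp [DhM, ha, h]

lemma DhM_self {a : Fin N} (ha : (a : ℕ) ≠ 0) (x : Pt N) :
    DhM a a x = -(Sf a x) / x.2 a := by simp [DhM, ha]

lemma DfL_ge' (a i : Fin N) (x : Pt N) (ha : (a : ℕ) ≠ 0) (h1 : ¬i < a) (h2 : i ≠ a) :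
    DfL a i x = 0 := by simp [DfL, ha, h1, h2]

lemma DhM_ge' (a i : Fin N) (x : Pt N) (ha : (a : ℕ) ≠ 0) (h1 : ¬i < a) (h2 : i ≠ a) :
    DhM a i x = 0 := by simp [DhM, ha, h1, h2]

lemma fderiv_lamF_f (a i : Fin N) (hfa : x.2 a ≠ 0) :
    fderiv ℂ (lamF a) x ((0 : Fin N → ℂ), Pi.single i 1) = DfL a i x := by
  rw [(hasF_lamF a hfa).fderiv]
  by_cases ha : (a : ℕ) = 0
  · simp [ha, DfL, ContinuousLinearMap.sum_apply, Finset.sum_pi_single']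
  · simp only [if_neg ha, ContinuousLinearMap.add_apply, ContinuousLinearMap.smul_apply,
      ContinuousLinearMap.neg_apply, ContinuousLinearMap.sum_apply,
      ContinuousLinearMap.comp_apply, ContinuousLinearMap.smulRight_apply,
      ContinuousLinearMap.one_apply, projf_apply, projh_apply, Pi.single_apply,
      Pi.zero_apply, Finset.sum_const_zero, sum_ite_Tlt, smul_eq_mul]
    rcases lt_trichotomy i a with h | h | h
    · rw [DfL_lt ha h, if_pos h, if_neg (ne_of_gt h)]
      ring
    · subst h
      rw [DfL_self ha, if_neg (lt_irrefl i), if_pos rfl]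
      field_simp
      ring
    · rw [DfL_ge' a i x ha (lt_asymm h) (ne_of_gt h), if_neg (lt_asymm h), if_neg (ne_of_lt h)]
      ring

lemma muF_eq_of_ne (a : Fin N) (ha : (a : ℕ) ≠ 0) :
    muF a = fun y : Pt N => (-(Sf a y) * (y.2 a)⁻¹) * y.1 a + ∑ k ∈ Tlt a, y.1 k := by
  funext y
  simp only [muF, if_neg ha, lamF, Sf, Tlt, div_eq_mul_inv]
  ring

lemma hasF_muF (a : Fin N) (hfa : x.2 a ≠ 0) :
    HasFDerivAt (muF a)
      (if (a : ℕ) = 0 then ∑ i, projh i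
       else ((-(Sf a x) * (x.2 a)⁻¹) • projh a
              + x.1 a • ((-(Sf a x)) • ((ContinuousLinearMap.smulRight (1 : ℂ →L[ℂ] ℂ)
                  (-(x.2 a ^ 2)⁻¹)).comp (projf a))
                + (x.2 a)⁻¹ • (-(∑ k ∈ Tlt a, projf k))))
            + ∑ k ∈ Tlt a, projh k) x := by
  by_cases ha : (a : ℕ) = 0
  · rw [if_pos ha]
    have hEq : muF a = fun y : Pt N => ∑ i, y.1 i := funext fun y => if_pos ha
    rw [hEq]
    exact HasFDerivAt.fun_sum fun i _ => hasF_h i x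
  · rw [if_neg ha, muF_eq_of_ne a ha]
    have hinv : HasFDerivAt (fun y : Pt N => (y.2 a)⁻¹)
        ((ContinuousLinearMap.smulRight (1 : ℂ →L[ℂ] ℂ) (-(x.2 a ^ 2)⁻¹)).comp (projf a)) x :=
      (hasFDerivAt_inv hfa).comp x (hasF_f a x)
    have h1 : HasFDerivAt (fun y : Pt N => -(Sf a y) * (y.2 a)⁻¹)
        ((-(Sf a x)) • ((ContinuousLinearMap.smulRight (1 : ℂ →L[ℂ] ℂ)
              (-(x.2 a ^ 2)⁻¹)).comp (projf a))
            + (x.2 a)⁻¹ • (-(∑ k ∈ Tlt a, projf k))) x :=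
      ((hasF_Sf a x).neg).mul hinv
    exact (h1.mul (hasF_h a x)).add (hasF_Sh a x)

lemma fderiv_muF_h (a i : Fin N) (hfa : x.2 a ≠ 0) :
    fderiv ℂ (muF a) x (Pi.single i 1, (0 : Fin N → ℂ)) = DhM a i x := by
  rw [(hasF_muF a hfa).fderiv]
  by_cases ha : (a : ℕ) = 0
  · simp [ha, DhM, ContinuousLinearMap.sum_apply, Finset.sum_pi_single']
  · simp only [if_neg ha, ContinuousLinearMap.add_apply, ContinuousLinearMap.smul_apply,
      ContinuousLinearMap.neg_apply, ContinuousLinearMap.sum_apply,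
      ContinuousLinearMap.comp_apply, ContinuousLinearMap.smulRight_apply,
      ContinuousLinearMap.one_apply, projf_apply, projh_apply, Pi.single_apply,
      Pi.zero_apply, Finset.sum_const_zero, sum_ite_Tlt, smul_eq_mul]
    rcases lt_trichotomy i a with h | h | h
    · rw [DhM_lt ha h, if_pos h, if_neg (ne_of_gt h)]
      ring
    · subst h
      rw [DhM_self ha, if_neg (lt_irrefl i), if_pos rfl]
      field_simp
      ring
    · rw [DhM_ge' a i x ha (lt_asymm h) (ne_of_gt h), if_neg (lt_asymm h), if_neg (ne_of_lt h)]
      ring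

lemma fderiv_muF_f (a i : Fin N) (hfa : x.2 a ≠ 0) :
    fderiv ℂ (muF a) x ((0 : Fin N → ℂ), Pi.single i 1) = DfM a i x := by
  rw [(hasF_muF a hfa).fderiv]
  by_cases ha : (a : ℕ) = 0
  · simp [ha, DfM, ContinuousLinearMap.sum_apply]
  · simp only [if_neg ha, ContinuousLinearMap.add_apply, ContinuousLinearMap.smul_apply,
      ContinuousLinearMap.neg_apply, ContinuousLinearMap.sum_apply,
      ContinuousLinearMap.comp_apply, ContinuousLinearMap.smulRight_apply,
      ContinuousLinearMap.one_apply, projf_apply, projh_apply, Pi.single_apply,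
      Pi.zero_apply, Finset.sum_const_zero, sum_ite_Tlt, smul_eq_mul]
    rw [DfM, if_neg ha]
    rcases lt_trichotomy i a with h | h | h
    · rw [DfL_lt ha h, if_pos h, if_neg (ne_of_gt h)]
      ring
    · subst h
      rw [DfL_self ha, if_neg (lt_irrefl i), if_pos rfl]
      field_simp
      ring
    · rw [DfL_ge' a i x ha (lt_asymm h) (ne_of_gt h), if_neg (lt_asymm h), if_neg (ne_of_lt h)]
      ring

end derivs

/-- Splitting a sum supported on indices `≤ b`. -/
lemma sum_eq_low (b : Fin N) (g : Fin N → ℂ) (hg : ∀ i, ¬i < b → i ≠ b → g i = 0) :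
    ∑ i, g i = (∑ i ∈ Tlt b, g i) + g b := by
  have hb : b ∉ Tlt b := by simp [mem_Tlt]
  have h1 : ∑ i, g i = ∑ i ∈ insert b (Tlt b), g i := by
    refine (Finset.sum_subset (Finset.subset_univ _) fun i _ hi => ?_).symm
    simp only [Finset.mem_insert, mem_Tlt, not_or] at hi
    exact hg i hi.2 hi.1
  rw [h1, Finset.sum_insert hb]
  ring

lemma DfL_ge (a i : Fin N) (x : Pt N) (ha : (a : ℕ) ≠ 0) (h1 : ¬i < a) (h2 : i ≠ a) :
    DfL a i x = 0 := by simp [DfL, ha, h1, h2]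

lemma DhM_ge (a i : Fin N) (x : Pt N) (ha : (a : ℕ) ≠ 0) (h1 : ¬i < a) (h2 : i ≠ a) :
    DhM a i x = 0 := by simp [DhM, ha, h1, h2]

lemma pb_antisymm {F G : Pt N → ℂ} (x : Pt N) : pb F G x = -pb G F x := by
  unfold pb
  rw [← Finset.sum_neg_distrib]
  exact Finset.sum_congr rfl fun i _ => by ring

section main

variable {x : Pt N} (hx : ∀ i, x.2 i ≠ 0)

include hx

lemma pb_lam_lam (a b : Fin N) : pb (lamF a) (lamF b) x = 0 := by
  unfold pb
  refine Finset.sum_eq_zero fun i _ => ?_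
  rw [fderiv_lamF_h a i (hx a), fderiv_lamF_h b i (hx b)]
  ring

lemma pb_lam_mu_eval (a b : Fin N) :
    pb (lamF a) (muF b) x = ∑ i, x.2 i * (DfL a i x * DhM b i x) := by
  unfold pb
  refine Finset.sum_congr rfl fun i _ => ?_
  rw [fderiv_lamF_h a i (hx a), fderiv_lamF_f a i (hx a),
    fderiv_muF_h b i (hx b), fderiv_muF_f b i (hx b)]
  ring

lemma pb_mu_mu_eval (a b : Fin N) :
    pb (muF a) (muF b) x =
      (∑ i, x.2 i * (DfM a i x * DhM b i x)) - ∑ i, x.2 i * (DhM a i x * DfM b i x) := by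
  unfold pb
  rw [← Finset.sum_sub_distrib]
  refine Finset.sum_congr rfl fun i _ => ?_
  rw [fderiv_muF_h a i (hx a), fderiv_muF_f a i (hx a),
    fderiv_muF_h b i (hx b), fderiv_muF_f b i (hx b)]
  ring

/-- Key computation: `∑_i f_i · DfL a i · c = 0` for `a ≠ 0`. -/
lemma sum_f_DfL (a : Fin N) (ha : (a : ℕ) ≠ 0) (c : ℂ) :
    ∑ i, x.2 i * (DfL a i x * c) = 0 := by
  rw [sum_eq_low a _ (fun i h1 h2 => by rw [DfL_ge a i x ha h1 h2]; ring)]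
  have h1 : ∑ i ∈ Tlt a, x.2 i * (DfL a i x * c) = Sf a x * (-(x.2 a)⁻¹ * c) := by
    rw [Sf, Finset.sum_mul]
    refine Finset.sum_congr rfl fun i hi => ?_
    rw [mem_Tlt] at hi
    simp [DfL, ha, hi]
  rw [h1]
  simp only [DfL, if_neg ha, if_neg (lt_irrefl a), if_pos rfl]
  simp only [eq_self_iff_true, if_true]
  field_simp [hx a]
  ring

/-- Key computation: `∑_i f_i · c · DhM b i = 0` for `b ≠ 0`. -/
lemma sum_f_DhM (b : Fin N) (hb : (b : ℕ) ≠ 0) (c : ℂ) :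
    ∑ i, x.2 i * (c * DhM b i x) = 0 := by
  rw [sum_eq_low b _ (fun i h1 h2 => by rw [DhM_ge b i x hb h1 h2]; ring)]
  have h1 : ∑ i ∈ Tlt b, x.2 i * (c * DhM b i x) = Sf b x * c := by
    rw [Sf, Finset.sum_mul]
    refine Finset.sum_congr rfl fun i hi => ?_
    rw [mem_Tlt] at hi
    simp only [DhM, if_neg hb, if_pos hi]
    ring
  rw [h1]
  simp only [DhM, if_neg hb, if_neg (lt_irrefl b), if_pos rfl]
  simp only [eq_self_iff_true, if_true]
  field_simp [hx b]
  ring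

lemma pb_lam_mu (a b : Fin N) (hab : a ≠ b) : pb (lamF a) (muF b) x = 0 := by
  rw [pb_lam_mu_eval hx a b]
  by_cases ha : (a : ℕ) = 0
  · have hb : (b : ℕ) ≠ 0 := fun hb0 => hab (Fin.ext (by omega))
    have h : ∀ i, x.2 i * (DfL a i x * DhM b i x) = x.2 i * ((1 : ℂ) * DhM b i x) := by
      intro i; simp [DfL, ha]
    rw [Finset.sum_congr rfl fun i _ => h i]
    exact sum_f_DhM hx b hb 1
  · by_cases hb : (b : ℕ) = 0
    · have h : ∀ i, x.2 i * (DfL a i x * DhM b i x) = x.2 i * (DfL a i x * 1) := by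
        intro i; simp [DhM, hb]
      rw [Finset.sum_congr rfl fun i _ => h i]
      exact sum_f_DfL hx a ha 1
    · rcases lt_trichotomy a b with h | h | h
      · have key : ∀ i, x.2 i * (DfL a i x * DhM b i x) = x.2 i * (DfL a i x * 1) := by
          intro i
          rcases lt_trichotomy i a with hi | hi | hi
          · simp [DhM, hb, hi.trans h]
          · subst hi; simp [DhM, hb, h]
          · rw [DfL_ge a i x ha (not_lt_of_gt hi) (ne_of_gt hi)]; ring
        rw [Finset.sum_congr rfl fun i _ => key i]
        exact sum_f_DfL hx a ha 1
      · exact absurd h hab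
      · have key : ∀ i, x.2 i * (DfL a i x * DhM b i x)
            = x.2 i * (-(x.2 a)⁻¹ * DhM b i x) := by
          intro i
          rcases lt_trichotomy i b with hi | hi | hi
          · simp [DfL, ha, hi.trans h]
          · subst hi; simp [DfL, ha, h]
          · rw [DhM_ge b i x hb (not_lt_of_gt hi) (ne_of_gt hi)]; ring
        rw [Finset.sum_congr rfl fun i _ => key i]
        exact sum_f_DhM hx b hb _

lemma pb_mu_mu_lt (a b : Fin N) (hab : a < b) : pb (muF a) (muF b) x = 0 := by
  rw [pb_mu_mu_eval hx a b]
  have hb : (b : ℕ) ≠ 0 := by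
    have := Fin.lt_iff_val_lt_val.mp hab
    omega
  by_cases ha : (a : ℕ) = 0
  · have h1 : ∀ i, x.2 i * (DfM a i x * DhM b i x) = 0 := by
      intro i; simp [DfM, ha]
    have h2 : ∀ i, x.2 i * (DhM a i x * DfM b i x)
        = x.2 i * (DfL b i x * x.1 b) := by
      intro i; simp [DhM, DfM, ha, hb]
    rw [Finset.sum_congr rfl fun i _ => h1 i, Finset.sum_congr rfl fun i _ => h2 i,
      Finset.sum_eq_zero fun i _ => rfl, sum_f_DfL hx b hb (x.1 b)]
    ring
  · have h1 : ∀ i, x.2 i * (DfM a i x * DhM b i x)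
        = x.2 i * (DfL a i x * x.1 a) := by
      intro i
      rcases lt_trichotomy i a with hi | hi | hi
      · simp [DfM, DhM, ha, hb, hi.trans hab]
      · subst hi; simp [DfM, DhM, ha, hb, hab]
      · rw [DfM, if_neg ha, DfL_ge a i x ha (not_lt_of_gt hi) (ne_of_gt hi)]; ring
    have h2 : ∀ i, x.2 i * (DhM a i x * DfM b i x)
        = x.2 i * ((-(x.2 b)⁻¹ * x.1 b) * DhM a i x) := by
      intro i
      rcases lt_trichotomy i a with hi | hi | hi
      · rw [DfM, if_neg hb, DfL]
        rw [if_neg hb, if_pos (hi.trans hab)]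
        ring
      · subst hi
        rw [DfM, if_neg hb, DfL]
        rw [if_neg hb, if_pos hab]
        ring
      · rw [DhM_ge a i x ha (not_lt_of_gt hi) (ne_of_gt hi)]; ring
    rw [Finset.sum_congr rfl fun i _ => h1 i, Finset.sum_congr rfl fun i _ => h2 i,
      sum_f_DfL hx a ha (x.1 a), sum_f_DhM hx a ha (-(x.2 b)⁻¹ * x.1 b)]
    ring

lemma pb_mu_mu (a b : Fin N) : pb (muF a) (muF b) x = 0 := by
  rcases lt_trichotomy a b with h | h | h
  · exact pb_mu_mu_lt hx a b h
  · subst h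
    unfold pb
    exact Finset.sum_eq_zero fun i _ => by ring
  · rw [pb_antisymm, pb_mu_mu_lt hx b a h, neg_zero]

end main

end Stmt17Aux

/-- On the open set where all `f_i ≠ 0`, the functions `(λ_i, μ_i)` satisfy
`{λ_i, λ_j} = 0`, `{μ_i, μ_j} = 0`, and `{λ_i, μ_j} = 0` whenever `i ≠ j`. -/
theorem stmt17 (N : ℕ) (hN : 2 ≤ N) (x : (Fin N → ℂ) × (Fin N → ℂ))
    (hx : ∀ i, x.2 i ≠ 0) :
    ∀ i j : Fin N,
      pb (lamF i) (lamF j) x = 0 ∧ pb (muF i) (muF j) x = 0 ∧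
        (i ≠ j → pb (lamF i) (muF j) x = 0) := by
  intro i j
  exact ⟨Stmt17Aux.pb_lam_lam hx i j, Stmt17Aux.pb_mu_mu hx i j,
    fun hij => Stmt17Aux.pb_lam_mu hx i j hij⟩
end

section
/- Fix N ≥ 2 and n ∈ {2, …, N}. For complex numbers f_1, …, f_N with f_n ≠ 0, set λ_n = −(Σ_{k=1}^{n−1} f_k)/f_n + (n−2), and define for i, j ∈ {1, …, N}: {h_i, f_j}_P := −δ_{ij} f_j and {h_i, f_j}_R := −δ_{ij}((i−1) f_i − Σ_{k=1}^{i−1} f_k) − θ(i−j) f_j − θ(j−i) f_i, and the chain-rule coefficients ∂λ_n/∂f_j = −θ(n−j)/f_n + δ_{jn}(n−2−λ_n)/f_n. Then for every i ∈ {1, …, N}: Σ_{j=1}^N (∂λ_n/∂f_j) {h_i, f_j}_R = λ_n · Σ_{j=1}^N (∂λ_n/∂f_j) {h_i, f_j}_P, and both sides equal λ_n ( (λ_n − n + 2) δ_{in} + θ(n−i) f_i/f_n ). -/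
lemma hv_pos {m : ℤ} (h : 0 < m) : hv m = 1 := if_pos h

lemma hv_np {m : ℤ} (h : m ≤ 0) : hv m = 0 := if_neg (not_lt.2 h)

lemma kd_self {i j : ℤ} (h : i = j) : kd i j = 1 := if_pos h

lemma kd_ne {i j : ℤ} (h : i ≠ j) : kd i j = 0 := if_neg h

/-- Truncation of a sum against coefficients that are constant below `n` and vanish
above `n`. -/
lemma sum_trunc (N n : ℕ) (hn2 : 2 ≤ n) (hnN : n ≤ N) (c : ℂ) (d g : ℕ → ℂ)
    (hlt : ∀ j, 1 ≤ j → j < n → d j = c) (hgt : ∀ j, n < j → d j = 0) :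
    ∑ j ∈ Finset.Icc 1 N, d j * g j
      = c * ∑ j ∈ Finset.Icc 1 (n - 1), g j + d n * g n := by
  have h1 : ∑ j ∈ Finset.Icc 1 N, d j * g j = ∑ j ∈ Finset.Icc 1 n, d j * g j := by
    refine (Finset.sum_subset (Finset.Icc_subset_Icc le_rfl hnN) ?_).symm
    intro x hx hx'
    simp only [Finset.mem_Icc] at hx hx'
    rw [hgt x (by omega), zero_mul]
  obtain ⟨m, rfl⟩ : ∃ m, n = m + 1 := ⟨n - 1, by omega⟩
  rw [h1, Finset.sum_Icc_succ_top (by omega)]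
  simp only [Nat.add_sub_cancel]
  congr 1
  rw [Finset.mul_sum]
  refine Finset.sum_congr rfl ?_
  intro j hj
  simp only [Finset.mem_Icc] at hj
  rw [hlt j hj.1 (by omega)]

/-- The eigenvalue equation `{h_i, λ_n}_R = λ_n {h_i, λ_n}_P` for the Nijenhuis
coordinate `λ_n = −(Σ_{k=1}^{n−1} f_k)/f_n + (n−2)`: with the coordinate brackets
`{h_i, f_j}_P = −δ_{ij} f_j`,
`{h_i, f_j}_R = −δ_{ij}((i−1) f_i − Σ_{k=1}^{i−1} f_k) − θ(i−j) f_j − θ(j−i) f_i`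
and the chain-rule coefficients `∂λ_n/∂f_j = −θ(n−j)/f_n + δ_{jn}(n−2−λ_n)/f_n`, one has
`Σ_j (∂λ_n/∂f_j) {h_i, f_j}_R = λ_n Σ_j (∂λ_n/∂f_j) {h_i, f_j}_P`, and both sides equal
`λ_n ((λ_n − n + 2) δ_{in} + θ(n−i) f_i/f_n)`. -/
theorem stmt19 (N : ℕ) (hN : 2 ≤ N) (n : ℕ) (hn : n ∈ Finset.Icc 2 N)
    (f : ℕ → ℂ) (hfn : f n ≠ 0)
    (lamn : ℂ) (hlamn : lamn = -(∑ k ∈ Finset.Icc 1 (n - 1), f k) / f n + ((n : ℂ) - 2))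
    (Pbr Rbr : ℕ → ℕ → ℂ)
    (hPbr : ∀ i j, Pbr i j = -((kd (i : ℤ) (j : ℤ) : ℤ) : ℂ) * f j)
    (hRbr : ∀ i j, Rbr i j =
      -((kd (i : ℤ) (j : ℤ) : ℤ) : ℂ) *
          (((i : ℂ) - 1) * f i - ∑ k ∈ Finset.Icc 1 (i - 1), f k)
        - ((hv ((i : ℤ) - (j : ℤ)) : ℤ) : ℂ) * f j
        - ((hv ((j : ℤ) - (i : ℤ)) : ℤ) : ℂ) * f i)
    (dlam : ℕ → ℂ)
    (hdlam : ∀ j, dlam j = -((hv ((n : ℤ) - (j : ℤ)) : ℤ) : ℂ) / f n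
      + ((kd (j : ℤ) (n : ℤ) : ℤ) : ℂ) * ((n : ℂ) - 2 - lamn) / f n) :
    ∀ i ∈ Finset.Icc 1 N,
      (∑ j ∈ Finset.Icc 1 N, dlam j * Rbr i j =
          lamn * ∑ j ∈ Finset.Icc 1 N, dlam j * Pbr i j)
      ∧ ∑ j ∈ Finset.Icc 1 N, dlam j * Rbr i j =
          lamn * ((lamn - (n : ℂ) + 2) * ((kd (i : ℤ) (n : ℤ) : ℤ) : ℂ)
            + ((hv ((n : ℤ) - (i : ℤ)) : ℤ) : ℂ) * f i / f n) := by
  simp only [Finset.mem_Icc] at hn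
  obtain ⟨hn2, hnN⟩ := hn
  intro i hi
  simp only [Finset.mem_Icc] at hi
  obtain ⟨hi1, hiN⟩ := hi
  set S : ℂ := ∑ k ∈ Finset.Icc 1 (n - 1), f k with hS
  -- facts about dlam
  have hd_lt : ∀ j, 1 ≤ j → j < n → dlam j = -1 / f n := by
    intro j _ hj
    rw [hdlam j, hv_pos (by omega), kd_ne (by omega)]
    push_cast
    ring
  have hd_gt : ∀ j, n < j → dlam j = 0 := by
    intro j hj
    rw [hdlam j, hv_np (by omega), kd_ne (by omega)]
    push_cast
    ring
  have hdn : dlam n = ((n : ℂ) - 2 - lamn) / f n := by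
    rw [hdlam n, hv_np (by omega), kd_self rfl]
    push_cast
    ring
  have hRtr : ∑ j ∈ Finset.Icc 1 N, dlam j * Rbr i j
      = -1 / f n * ∑ j ∈ Finset.Icc 1 (n - 1), Rbr i j + dlam n * Rbr i n :=
    sum_trunc N n hn2 hnN (-1 / f n) dlam (fun j => Rbr i j) hd_lt hd_gt
  have hPtr : ∑ j ∈ Finset.Icc 1 N, dlam j * Pbr i j
      = -1 / f n * ∑ j ∈ Finset.Icc 1 (n - 1), Pbr i j + dlam n * Pbr i n :=
    sum_trunc N n hn2 hnN (-1 / f n) dlam (fun j => Pbr i j) hd_lt hd_gt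
  rcases lt_trichotomy i n with hlt | heq | hgt
  · -- case i < n
    -- sum of Rbr i j over j in Icc 1 (n-1)
    have hRsum : ∑ j ∈ Finset.Icc 1 (n - 1), Rbr i j = -((n : ℂ) - 2) * f i := by
      have split : ∑ j ∈ Finset.Icc 1 (n - 1), Rbr i j =
          (∑ j ∈ Finset.Icc 1 (n - 1),
            -((kd (i : ℤ) (j : ℤ) : ℤ) : ℂ) *
              (((i : ℂ) - 1) * f i - ∑ k ∈ Finset.Icc 1 (i - 1), f k))
          - (∑ j ∈ Finset.Icc 1 (n - 1), ((hv ((i : ℤ) - (j : ℤ)) : ℤ) : ℂ) * f j)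
          - (∑ j ∈ Finset.Icc 1 (n - 1), ((hv ((j : ℤ) - (i : ℤ)) : ℤ) : ℂ) * f i) := by
        rw [← Finset.sum_sub_distrib, ← Finset.sum_sub_distrib]
        exact Finset.sum_congr rfl fun j _ => hRbr i j
      have T1 : ∑ j ∈ Finset.Icc 1 (n - 1),
          -((kd (i : ℤ) (j : ℤ) : ℤ) : ℂ) *
            (((i : ℂ) - 1) * f i - ∑ k ∈ Finset.Icc 1 (i - 1), f k)
          = -((((i : ℂ) - 1) * f i - ∑ k ∈ Finset.Icc 1 (i - 1), f k)) := by
        rw [Finset.sum_eq_single_of_mem i (by simp only [Finset.mem_Icc]; omega)]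
        · rw [kd_self rfl]; push_cast; ring
        · intro j _ hj
          rw [kd_ne (by omega)]
          push_cast
          ring
      have T2 : ∑ j ∈ Finset.Icc 1 (n - 1), ((hv ((i : ℤ) - (j : ℤ)) : ℤ) : ℂ) * f j
          = ∑ k ∈ Finset.Icc 1 (i - 1), f k := by
        rw [← Finset.sum_subset (Finset.Icc_subset_Icc le_rfl (by omega : i - 1 ≤ n - 1))]
        · refine Finset.sum_congr rfl ?_
          intro j hj
          simp only [Finset.mem_Icc] at hj
          rw [hv_pos (by omega)]
          push_cast
          ring
        · intro x hx hx'
          simp only [Finset.mem_Icc] at hx hx'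
          rw [hv_np (by omega)]
          push_cast
          ring
      have T3 : ∑ j ∈ Finset.Icc 1 (n - 1), ((hv ((j : ℤ) - (i : ℤ)) : ℤ) : ℂ) * f i
          = ((n : ℂ) - 1 - (i : ℂ)) * f i := by
        rw [← Finset.sum_subset
            (Finset.Icc_subset_Icc (by omega : 1 ≤ i + 1) le_rfl :
              Finset.Icc (i + 1) (n - 1) ⊆ Finset.Icc 1 (n - 1))]
        · rw [Finset.sum_congr rfl (fun j hj => ?_), Finset.sum_const, Nat.card_Icc,
            nsmul_eq_mul]
          · congr 1
            have hc : n - 1 + 1 - (i + 1) = n - 1 - i := by omega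
            rw [hc, Nat.cast_sub (show i ≤ n - 1 by omega),
              Nat.cast_sub (show 1 ≤ n by omega)]
            push_cast
            ring
          · simp only [Finset.mem_Icc] at hj
            rw [hv_pos (by omega)]
            push_cast
            ring
        · intro x hx hx'
          simp only [Finset.mem_Icc] at hx hx'
          rw [hv_np (by omega)]
          push_cast
          ring
      rw [split, T1, T2, T3]
      ring
    have hRin : Rbr i n = -f i := by
      rw [hRbr, kd_ne (by omega), hv_np (by omega), hv_pos (by omega)]
      push_cast
      ring
    have hPsum : ∑ j ∈ Finset.Icc 1 (n - 1), Pbr i j = -f i := by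
      rw [Finset.sum_eq_single_of_mem i (by simp only [Finset.mem_Icc]; omega)]
      · rw [hPbr, kd_self rfl]; push_cast; ring
      · intro j _ hj
        rw [hPbr, kd_ne (by omega)]
        push_cast
        ring
    have hPin : Pbr i n = 0 := by
      rw [hPbr, kd_ne (by omega)]
      push_cast
      ring
    rw [hRtr, hPtr, hRsum, hRin, hPsum, hPin, hdn, kd_ne (by omega : (i : ℤ) ≠ n),
      hv_pos (by omega : (0 : ℤ) < (n : ℤ) - (i : ℤ))]
    push_cast
    constructor <;> · field_simp; ring
  · -- case i = n
    subst heq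
    have hRsum : ∑ j ∈ Finset.Icc 1 (i - 1), Rbr i j = -S := by
      rw [hS, ← Finset.sum_neg_distrib]
      refine Finset.sum_congr rfl ?_
      intro j hj
      simp only [Finset.mem_Icc] at hj
      rw [hRbr, kd_ne (by omega), hv_pos (by omega), hv_np (by omega)]
      push_cast
      ring
    have hRin : Rbr i i = -(((i : ℂ) - 1) * f i - S) := by
      rw [hRbr, kd_self rfl, hv_np (show (i : ℤ) - (i : ℤ) ≤ 0 by omega), ← hS]
      push_cast
      ring
    have hPsum : ∑ j ∈ Finset.Icc 1 (i - 1), Pbr i j = 0 := by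
      refine Finset.sum_eq_zero ?_
      intro j hj
      simp only [Finset.mem_Icc] at hj
      rw [hPbr, kd_ne (by omega)]
      push_cast
      ring
    have hPin : Pbr i i = -f i := by
      rw [hPbr, kd_self rfl]; push_cast; ring
    rw [hRtr, hPtr, hRsum, hRin, hPsum, hPin, hdn, kd_self rfl,
      hv_np (by omega : (i : ℤ) - (i : ℤ) ≤ 0)]
    subst hlamn
    push_cast
    constructor <;> · field_simp; ring
  · -- case n < i
    have hRsum : ∑ j ∈ Finset.Icc 1 (n - 1), Rbr i j = -S := by
      rw [hS, ← Finset.sum_neg_distrib]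
      refine Finset.sum_congr rfl ?_
      intro j hj
      simp only [Finset.mem_Icc] at hj
      rw [hRbr, kd_ne (by omega), hv_pos (by omega), hv_np (by omega)]
      push_cast
      ring
    have hRin : Rbr i n = -f n := by
      rw [hRbr, kd_ne (by omega), hv_pos (by omega), hv_np (by omega)]
      push_cast
      ring
    have hPsum : ∑ j ∈ Finset.Icc 1 (n - 1), Pbr i j = 0 := by
      refine Finset.sum_eq_zero ?_
      intro j hj
      simp only [Finset.mem_Icc] at hj
      rw [hPbr, kd_ne (by omega)]
      push_cast
      ring
    have hPin : Pbr i n = 0 := by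
      rw [hPbr, kd_ne (by omega)]
      push_cast
      ring
    rw [hRtr, hPtr, hRsum, hRin, hPsum, hPin, hdn, kd_ne (by omega : (i : ℤ) ≠ n),
      hv_np (by omega : (n : ℤ) - (i : ℤ) ≤ 0)]
    subst hlamn
    push_cast
    constructor <;> · field_simp; ring
end
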